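/- arXiv:1705.00554 — 6 statements merged into one kernel-verified Lean document; each statement's English description precedes it below -/
import Mathlib

section
/- Every decomposable graph admits a pluperfect ordering of its cliques: an ordering C_1, …, C_J of the maximal cliques such that for each j ≥ 2 the separator S_j = C_j ∩ (C_1 ∪ … ∪ C_{j-1}) is not a proper subset of any separator S'_j = C' ∩ (C_1 ∪ … ∪ C_{j-1}) arising from a different clique C' available at step j (i.e., a clique C' ∉ {C_1,…,C_{j-1}} with C' ∩ (C_1 ∪ … ∪ C_{j-1}) contained in some single C_i, i < j). Moreover, any clique can be chosen first. -/
open scoped Classical BigOperators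

/-- A graph is decomposable (chordal) if it has no induced cycle of length at least 4. -/
def Chordal {V : Type*} (G : SimpleGraph V) : Prop :=
  ¬ ∃ (n : ℕ) (f : ZMod n ↪ V), 4 ≤ n ∧
      ∀ i j : ZMod n, G.Adj (f i) (f j) ↔ (i = j + 1 ∨ j = i + 1)

/-- `C` is a maximal clique (a "clique" in the terminology of the paper) of `G`. -/
def MaxClique {V : Type*} (G : SimpleGraph V) (C : Set V) : Prop :=
  G.IsClique C ∧ ∀ D, G.IsClique D → C ⊆ D → C = D

/-- `C` is a maximal complete subset of the subgraph of `G` induced on `A`,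
i.e. a clique of `G_A`. -/
def MaxCliqueIn {V : Type*} (G : SimpleGraph V) (A C : Set V) : Prop :=
  C ⊆ A ∧ G.IsClique C ∧ ∀ D, D ⊆ A → G.IsClique D → C ⊆ D → C = D

/-- `(A,B)` is a decomposition of `G`: it covers the vertex set, `A ∩ B` is complete
and `A ∩ B` separates `A \ B` from `B \ A`. -/
def IsDecomposition {V : Type*} (G : SimpleGraph V) (A B : Set V) : Prop :=
  A ∪ B = Set.univ ∧ G.IsClique (A ∩ B) ∧
    ∀ u ∈ A \ B, ∀ v ∈ B \ A, ∀ p : G.Walk u v, ∃ w ∈ A ∩ B, w ∈ p.support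

/-- The graph `G⟨A₁,…,A_k⟩` on `V` that is complete on each member of `𝒜` and
has no other edges. -/
def coverGraph {V : Type*} (𝒜 : Set (Set V)) : SimpleGraph V where
  Adj u v := u ≠ v ∧ ∃ A ∈ 𝒜, u ∈ A ∧ v ∈ A
  symm := by
    constructor
    rintro u v ⟨huv, A, hA, hu, hv⟩
    exact ⟨huv.symm, A, hA, hv, hu⟩
  loopless := by constructor; rintro v ⟨hv, -⟩; exact hv rfl

/-- Total mass that the density `π` puts on a set of graphs. -/
noncomputable def mass {V : Type*} (π : SimpleGraph V → ℝ) (S : Set (SimpleGraph V)) : ℝ :=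
  ∑ᶠ G ∈ S, π G

/-- `𝔘*(A,B)`: decomposable graphs for which `(A,B)` is a decomposition and
`A ∩ B` is a clique (maximal complete subgraph) of `G_A`. -/
def Ustar {V : Type*} (A B : Set V) : Set (SimpleGraph V) :=
  {G | Chordal G ∧ IsDecomposition G A B ∧ MaxCliqueIn G A (A ∩ B)}

/-- The weak structural Markov property: for every covering pair `(A,B)`,
the induced subgraphs `G_A` and `G_B` are independent conditionally on
`G ∈ 𝔘*(A,B)`. -/
def WeaklyStructurallyMarkov {V : Type*} (π : SimpleGraph V → ℝ) : Prop :=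
  ∀ A B : Set V, A ∪ B = Set.univ →
    ∀ H₁ ∈ Ustar A B, ∀ H₂ ∈ Ustar A B,
      mass π {G ∈ Ustar A B |
            G.induce A = H₁.induce A ∧ G.induce B = H₂.induce B} *
          mass π (Ustar A B) =
        mass π {G ∈ Ustar A B | G.induce A = H₁.induce A} *
          mass π {G ∈ Ustar A B | G.induce B = H₂.induce B}

/-- `π` is the density of a graph law on the set of decomposable graphs on `V`. -/
def IsGraphLaw {V : Type*} [Fintype V] (π : SimpleGraph V → ℝ) : Prop :=
  (∀ G, 0 ≤ π G) ∧ (∀ G, ¬ Chordal G → π G = 0) ∧ ∑ᶠ G : SimpleGraph V, π G = 1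

/-- `π` has full support on the decomposable graphs. -/
def FullSupport {V : Type*} (π : SimpleGraph V → ℝ) : Prop :=
  ∀ G, Chordal G → 0 < π G

/-- A junction tree for `G`: a tree on the maximal cliques of `G` such that the
cliques containing any fixed vertex form a connected subtree. -/
structure JunctionTree {V : Type*} (G : SimpleGraph V) where
  J : ℕ
  clique : Fin J → Set V
  clique_inj : Function.Injective clique
  clique_max : ∀ i, MaxClique G (clique i)
  clique_surj : ∀ C, MaxClique G C → ∃ i, clique i = C
  T : SimpleGraph (Fin J)
  isTree : T.IsTree
  junction : ∀ v : V, ((T.induce {i | v ∈ clique i}).Connected)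

/-- The separator associated with an (unordered) edge of a junction tree. -/
def JunctionTree.sep {V : Type*} {G : SimpleGraph V} (JT : JunctionTree G) :
    Sym2 (Fin JT.J) → Set V :=
  Sym2.lift ⟨fun i j => JT.clique i ∩ JT.clique j, fun i j => Set.inter_comm _ _⟩

/-- `π` is a clique–separator factorisation law: its density is proportional to
`∏_C φ_C / ∏_S ψ_S` over the cliques and separators of `G`. -/
def IsCSFLaw {V : Type*} (π : SimpleGraph V → ℝ) : Prop :=
  ∃ (φ ψ : Set V → ℝ) (c : ℝ), (∀ A, 0 < φ A) ∧ (∀ A, 0 < ψ A) ∧ 0 < c ∧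
    ∀ G : SimpleGraph V, Chordal G → ∀ JT : JunctionTree G,
      π G = c * (∏ i : Fin JT.J, φ (JT.clique i)) /
        ∏ᶠ e ∈ JT.T.edgeSet, ψ (JT.sep e)

/-- The union of the cliques visited before step `j`. -/
def priorUnion {V : Type*} {J : ℕ} (f : Fin J → Set V) (j : Fin J) : Set V :=
  ⋃ i ∈ {i : Fin J | i < j}, f i

/-- `f` is a pluperfect ordering of the (maximal) cliques of `G`: at each step the
clique chosen is available and its separator is not a proper subset of the
separator of any other available clique. -/
def PluperfectOrdering {V : Type*} (G : SimpleGraph V) {J : ℕ} (f : Fin J → Set V) : Prop :=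
  Function.Injective f ∧ (∀ i, MaxClique G (f i)) ∧ (∀ C, MaxClique G C → ∃ i, f i = C) ∧
  ∀ j : Fin J, (j : ℕ) ≠ 0 →
    (∃ i < j, f j ∩ priorUnion f j ⊆ f i) ∧
    ∀ k : Fin J, j ≤ k → (∃ i < j, f k ∩ priorUnion f j ⊆ f i) →
      ¬ f j ∩ priorUnion f j ⊂ f k ∩ priorUnion f j

/-!
A junction tree of a chordal graph is built by induction on the vertex set, removing a
simplicial vertex `v` with neighbourhood `N`: the clique `insert v N` either replaces `N`, if `N`
was a maximal clique of the smaller graph, or is attached as a leaf to a clique containing `N`. Simplicial vertices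
exist by Dirac's lemma, whose proof rests on the fact that minimal vertex separators of a
chordal graph are cliques.

The cliques are then ordered greedily along the tree: with `W` the visited subtree, an
unvisited clique `C` whose separator `C ∩ ⋃ W` has maximal size is chosen. Every clique on the
tree path from `C` to `W` contains that separator, so the maximiser can be taken adjacent to `W`;
then `W` stays a subtree, the separator lies in the neighbouring visited clique, and a separator
of maximal size is not a proper subset of any other.
-/

namespace SimpleGraph

variable {V : Type*} {G G' : SimpleGraph V}

def ReachableIn (G : SimpleGraph V) (X : Set V) (u v : V) : Prop :=
  ∃ p : G.Walk u v, ∀ x ∈ p.support, x ∈ X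

def ConnectedIn (G : SimpleGraph V) (X : Set V) : Prop :=
  ∀ u ∈ X, ∀ v ∈ X, G.ReachableIn X u v

namespace ReachableIn

variable {X Y : Set V} {u v w : V}

theorem refl (hu : u ∈ X) : G.ReachableIn X u u :=
  ⟨.nil, by simpa using hu⟩

theorem of_adj (h : G.Adj u v) (hu : u ∈ X) (hv : v ∈ X) : G.ReachableIn X u v :=
  ⟨h.toWalk, by simp [hu, hv]⟩

theorem mem_right (h : G.ReachableIn X u v) : v ∈ X :=
  h.elim fun p hp => hp v p.end_mem_support

@[symm] theorem symm (h : G.ReachableIn X u v) : G.ReachableIn X v u :=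
  h.elim fun p hp => ⟨p.reverse, by simpa using hp⟩

@[trans] theorem trans (h₁ : G.ReachableIn X u v) (h₂ : G.ReachableIn X v w) :
    G.ReachableIn X u w := by
  obtain ⟨p, hp⟩ := h₁
  obtain ⟨q, hq⟩ := h₂
  refine ⟨p.append q, fun x hx => ?_⟩
  rcases Walk.mem_support_append_iff p q |>.mp hx with hx | hx
  exacts [hp x hx, hq x hx]

theorem mono (hXY : X ⊆ Y) (h : G.ReachableIn X u v) : G.ReachableIn Y u v :=
  h.elim fun p hp => ⟨p, fun x hx => hXY (hp x hx)⟩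

theorem mono_graph (hGG' : G ≤ G') (h : G.ReachableIn X u v) : G'.ReachableIn X u v :=
  h.elim fun p hp => ⟨p.mapLe hGG', by simpa using hp⟩

theorem map {W : Type*} {H : SimpleGraph W} (f : G →g H) (h : G.ReachableIn X u v) :
    H.ReachableIn (f '' X) (f u) (f v) :=
  h.elim fun p hp => ⟨p.map f, by simpa using fun x hx => Set.mem_image_of_mem f (hp x hx)⟩

theorem to_component (hu : G.ReachableIn X w u) (h : G.ReachableIn X u v) :
    G.ReachableIn {x | G.ReachableIn X w x} u v := by
  obtain ⟨p, hp⟩ := h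
  refine ⟨p, fun x hx => hu.trans ⟨p.takeUntil x hx, fun y hy => hp y ?_⟩⟩
  exact p.support_takeUntil_subset_support hx hy

theorem _root_.SimpleGraph.Walk.exists_adj_of_not_reachableIn (p : G.Walk u v) (hu : u ∈ X)
    (h : ¬ G.ReachableIn X u v) :
    ∃ x y, G.ReachableIn X u x ∧ y ∈ p.support ∧ y ∉ X ∧ G.Adj x y := by
  induction p with
  | nil => exact absurd (refl hu) h
  | @cons u w v hadj p ih =>
    by_cases hw : w ∈ X
    · obtain ⟨x, y, hx, hy, hyX, hxy⟩ :=
        ih hw fun hwv => h ((of_adj hadj hu hw).trans hwv)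
      exact ⟨x, y, (of_adj hadj hu hw).trans hx, by simp [hy], hyX, hxy⟩
    · exact ⟨u, w, refl hu, by simp, hw, hadj⟩

theorem exists_adj_of_insert {s : V} (hu : u ∈ X) (h : ¬ G.ReachableIn X u v)
    (hs : G.ReachableIn (insert s X) u v) : ∃ x, G.ReachableIn X u x ∧ G.Adj x s := by
  obtain ⟨p, hp⟩ := hs
  obtain ⟨x, y, hx, hy, hyX, hxy⟩ := p.exists_adj_of_not_reachableIn hu h
  obtain rfl : y = s := (hp y hy).resolve_right hyX
  exact ⟨x, hx, hxy⟩

theorem exists_shortest (h : G.ReachableIn X u v) :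
    ∃ p : G.Walk u v, (∀ x ∈ p.support, x ∈ X) ∧
      ∀ q : G.Walk u v, (∀ x ∈ q.support, x ∈ X) → p.length ≤ q.length := by
  have hex : ∃ n, ∃ p : G.Walk u v, (∀ x ∈ p.support, x ∈ X) ∧ p.length = n :=
    h.elim fun p hp => ⟨_, p, hp, rfl⟩
  obtain ⟨p, hp, hlen⟩ := Nat.find_spec hex
  exact ⟨p, hp, fun q hq => hlen ▸ Nat.find_min' hex ⟨q, hq, rfl⟩⟩

/-- A repeated vertex or a chord would give a shortcut. -/
theorem exists_induced_walk (h : G.ReachableIn X u v) :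
    ∃ p : G.Walk u v, (∀ x ∈ p.support, x ∈ X) ∧
      ∀ i j, i < j → j ≤ p.length →
        (p.getVert i = p.getVert j ∨ G.Adj (p.getVert i) (p.getVert j)) → j = i + 1 := by
  obtain ⟨p, hpX, hmin⟩ := h.exists_shortest
  refine ⟨p, hpX, fun i j hij hj hshort => ?_⟩
  have hsub : ∀ q : G.Walk u v, (∀ x ∈ q.support, x ∈ p.support) →
      ∀ x ∈ q.support, x ∈ X :=
    fun q hq x hx => hpX x (hq x hx)
  have htake := (p.isSubwalk_take i).support_subset
  have hdrop := (p.isSubwalk_drop j).support_subset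
  rcases hshort with heq | hadj
  · have := hmin ((p.take i).append ((p.drop j).copy heq.symm rfl)) (hsub _ fun x hx => by
      rcases Walk.mem_support_append_iff _ _ |>.mp hx with hx | hx
      · exact htake hx
      · exact hdrop (by simpa using hx))
    simp only [Walk.length_append, Walk.take_length, Walk.length_copy, Walk.drop_length] at this
    omega
  · have := hmin ((p.take i).append (.cons hadj (p.drop j))) (hsub _ fun x hx => by
      rcases Walk.mem_support_append_iff _ _ |>.mp hx with hx | hx
      · exact htake hx
      · rw [Walk.support_cons, List.mem_cons] at hx
        rcases hx with rfl | hx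
        · exact p.getVert_mem_support i
        · exact hdrop hx)
    simp only [Walk.length_append, Walk.take_length, Walk.length_cons, Walk.drop_length] at this
    omega

theorem exists_induced_path_of_not_adj {C : Set V} {s t : V} (hst : s ≠ t)
    (hnadj : ¬ G.Adj s t) (h : G.ReachableIn (insert s (insert t C)) s t) :
    ∃ p : G.Walk s t, 2 ≤ p.length ∧ (∀ i, 0 < i → i < p.length → p.getVert i ∈ C) ∧
      (∀ i j, i < j → j ≤ p.length → p.getVert i ≠ p.getVert j) ∧
      (∀ i j, i + 1 < j → j ≤ p.length → ¬ G.Adj (p.getVert i) (p.getVert j)) := by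
  obtain ⟨p, hpX, hind⟩ := h.exists_induced_walk
  have hinj : ∀ i j, i < j → j ≤ p.length → p.getVert i ≠ p.getVert j := by
    intro i j hij hj heq
    obtain rfl := hind i j hij hj (.inl heq)
    exact G.loopless.irrefl _ (heq ▸ p.adj_getVert_succ (by omega))
  have hlen : 2 ≤ p.length := by
    rcases Nat.lt_or_ge p.length 2 with hlt | hle
    · interval_cases hl : p.length
      · exact absurd (p.eq_of_length_eq_zero hl) hst
      · have := p.adj_getVert_succ (i := 0) (by omega)
        rw [zero_add, ← hl, p.getVert_zero, p.getVert_length] at this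
        exact absurd this hnadj
    · exact hle
  refine ⟨p, hlen, fun i hi0 hi => ?_, hinj, fun i j hij hj hadj => ?_⟩
  · rcases hpX _ (p.getVert_mem_support i) with hs | ht | hC
    · exact absurd (p.getVert_zero.trans hs.symm) (hinj 0 i hi0 hi.le)
    · exact absurd (ht.trans p.getVert_length.symm) (hinj i _ hi le_rfl)
    · exact hC
  · have := hind i j (by omega) hj (.inr hadj)
    omega

end ReachableIn

/-- Dropping any vertex of a separator of minimal size reconnects `a` and `b`, which gives each
separating vertex a neighbour on either side. -/
theorem exists_minimal_separator (A : Finset V) {a b : V} (ha : a ∈ A) (hb : b ∈ A)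
    (hab : a ≠ b) (hnadj : ¬ G.Adj a b) :
    ∃ S : Finset V, S ⊆ A ∧ a ∉ S ∧ b ∉ S ∧ ¬ G.ReachableIn (↑A \ ↑S) a b ∧
      ∀ s ∈ S, (∃ x, G.ReachableIn (↑A \ ↑S) a x ∧ G.Adj x s) ∧
        (∃ y, G.ReachableIn (↑A \ ↑S) b y ∧ G.Adj y s) := by
  set P := ((A.erase a).erase b).powerset.filter
    fun S : Finset V => ¬ G.ReachableIn (↑A \ ↑S) a b
  have hP : ((A.erase a).erase b) ∈ P := by
    refine Finset.mem_filter.mpr ⟨Finset.mem_powerset_self _, fun ⟨p, hp⟩ => ?_⟩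
    have hb' : ¬ G.ReachableIn {a} a b := fun h => hab (h.mem_right).symm
    obtain ⟨x, y, hx, hy, hya, hxy⟩ := p.exists_adj_of_not_reachableIn (Set.mem_singleton a) hb'
    obtain rfl : x = a := hx.mem_right
    have := hp y hy
    simp only [Finset.coe_erase, Set.mem_sdiff, Set.mem_singleton_iff] at this
    exact hnadj (by grind)
  obtain ⟨S, hSP, hSmin⟩ := Finset.exists_min_image P Finset.card ⟨_, hP⟩
  obtain ⟨hSsub, hsep⟩ := Finset.mem_filter.mp hSP
  have hSsub := Finset.mem_powerset.mp hSsub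
  have haS : a ∉ S := fun h => by simpa using hSsub h
  have hbS : b ∉ S := fun h => by simpa using hSsub h
  refine ⟨S, hSsub.trans ((Finset.erase_subset _ _).trans (Finset.erase_subset _ _)), haS, hbS,
    hsep, fun s hs => ?_⟩
  have hreach : G.ReachableIn (insert s (↑A \ ↑S)) a b := by
    by_contra h
    have hmem : S.erase s ∈ P := Finset.mem_filter.mpr
      ⟨Finset.mem_powerset.mpr ((Finset.erase_subset _ _).trans hSsub), fun h' =>
        h (h'.mono fun x hx => by by_cases hxs : x = s <;> simp_all)⟩
    exact absurd (hSmin _ hmem) (by simpa using Finset.card_erase_lt_of_mem hs)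
  exact ⟨hreach.exists_adj_of_insert ⟨ha, haS⟩ hsep,
    hreach.symm.exists_adj_of_insert ⟨hb, hbS⟩ fun h => hsep h.symm⟩

end SimpleGraph

theorem SimpleGraph.Walk.getVert_append_reverse_of_le {V : Type*} {G : SimpleGraph V} {s t : V}
    (p q : G.Walk s t) {k : ℕ} (hk : p.length ≤ k) :
    (p.append q.reverse).getVert k = q.getVert (p.length + q.length - k) := by
  rcases hk.eq_or_lt with rfl | hk
  · rw [getVert_append', if_pos le_rfl, Nat.add_sub_cancel_left, p.getVert_length,
      q.getVert_length]
  · rw [getVert_append', if_neg (by omega), getVert_reverse]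
    congr 1
    omega

theorem ZMod.val_add_one_eq_ite {L : ℕ} [Fact (1 < L)] (b : ZMod L) :
    (b + 1).val = if b.val + 1 = L then 0 else b.val + 1 := by
  have := ZMod.val_lt b
  rw [ZMod.val_add, ZMod.val_one]
  split_ifs with h
  · rw [h, Nat.mod_self]
  · exact Nat.mod_eq_of_lt (by omega)

namespace Chordal

open SimpleGraph

variable {V : Type*} {G : SimpleGraph V}

/-- Indices of the closed walk `c` are read modulo `c.length`: `(0, c.length - 1)` is its
closing edge, not a chord. -/
theorem exists_chord (hG : Chordal G) {u : V} (c : G.Walk u u) (hlen : 4 ≤ c.length)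
    (hinj : ∀ i j, i < j → j < c.length → c.getVert i ≠ c.getVert j) :
    ∃ i j, i + 1 < j ∧ j < c.length ∧ ¬ (i = 0 ∧ j + 1 = c.length) ∧
      G.Adj (c.getVert i) (c.getVert j) := by
  by_contra! hno
  set L := c.length
  have : Fact (1 < L) := ⟨by omega⟩
  have : NeZero L := ⟨by omega⟩
  have hadj_lt : ∀ a b, a < b → b < L →
      (G.Adj (c.getVert a) (c.getVert b) ↔ b = a + 1 ∨ (a = 0 ∧ b + 1 = L)) := by
    intro a b hab hb
    refine ⟨fun h => ?_, ?_⟩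
    · by_contra! h'
      exact hno a b (by omega) hb (fun ha => by omega) h
    · rintro (rfl | ⟨rfl, hb⟩)
      · exact c.adj_getVert_succ (by omega)
      · have := c.adj_getVert_succ (i := b) (by omega)
        rw [show b + 1 = L by omega, c.getVert_length] at this
        rwa [c.getVert_zero, G.adj_comm]
  refine hG ⟨L, ⟨fun z => c.getVert z.val, fun z w h => ZMod.val_injective L ?_⟩, hlen, ?_⟩
  · have hz := ZMod.val_lt z
    have hw := ZMod.val_lt w
    by_contra hne
    rcases Nat.lt_or_gt_of_ne hne with hlt | hlt
    exacts [hinj _ _ hlt hw h, hinj _ _ hlt hz h.symm]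
  · intro z w
    have hz := ZMod.val_lt z
    have hw := ZMod.val_lt w
    change G.Adj (c.getVert z.val) (c.getVert w.val) ↔ _
    simp only [← (ZMod.val_injective L).eq_iff, ZMod.val_add_one_eq_ite]
    rcases lt_trichotomy z.val w.val with hlt | heq | hlt
    · rw [hadj_lt _ _ hlt hw]
      split_ifs <;> omega
    · rw [heq]
      simp only [SimpleGraph.irrefl, false_iff]
      split_ifs <;> omega
    · rw [G.adj_comm, hadj_lt _ _ hlt hz]
      split_ifs <;> omega

/-- Otherwise shortest paths through the two regions close up to a chordless cycle of length at
least four. -/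
theorem adj_of_reachableIn_of_reachableIn (hG : Chordal G) {Ca Cb : Set V} {s t : V}
    (hdisj : Disjoint Ca Cb) (hsep : ∀ x ∈ Ca, ∀ y ∈ Cb, ¬ G.Adj x y)
    (hs : s ∉ Cb) (hst : s ≠ t)
    (ha : G.ReachableIn (insert s (insert t Ca)) s t)
    (hb : G.ReachableIn (insert s (insert t Cb)) s t) : G.Adj s t := by
  by_contra hnadj
  obtain ⟨p, hp2, hpC, hpinj, hpind⟩ := ha.exists_induced_path_of_not_adj hst hnadj
  obtain ⟨q, hq2, hqC, hqinj, hqind⟩ := hb.exists_induced_path_of_not_adj hst hnadj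
  set m := p.length with hm
  set L := m + q.length with hL
  have hleft : ∀ k, k ≤ m → (p.append q.reverse).getVert k = p.getVert k := fun k hk => by
    rw [Walk.getVert_append', if_pos hk]
  have hright : ∀ k, m ≤ k → (p.append q.reverse).getVert k = q.getVert (L - k) :=
    fun _ hk => p.getVert_append_reverse_of_le q hk
  have hmid : ∀ i j, i < m → m < j → j < L →
      (p.append q.reverse).getVert j ∈ Cb ∧ (0 < i → (p.append q.reverse).getVert i ∈ Ca) :=
    fun i j hi hmj hj => ⟨hright j hmj.le ▸ hqC _ (by omega) (by omega),
      fun hi0 => hleft i hi.le ▸ hpC i hi0 hi⟩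
  obtain ⟨i, j, hij, hj, hwrap, hadj⟩ := hG.exists_chord (p.append q.reverse)
    (by simp only [Walk.length_append, Walk.length_reverse]; omega)
    fun i j hij hj heq => by
      simp only [Walk.length_append, Walk.length_reverse] at hj
      rcases Nat.lt_or_ge m j with hmj | hjm
      · rcases Nat.lt_or_ge i m with him | hmi
        · obtain ⟨hjC, hiC⟩ := hmid i j him hmj hj
          rcases Nat.eq_zero_or_pos i with rfl | hi0
          · exact hs (by simpa [heq.symm] using hjC)
          · exact hdisj.ne_of_mem (hiC hi0) hjC heq
        · rw [hright i hmi, hright j hmj.le] at heq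
          exact hqinj _ _ (by omega) (by omega) heq.symm
      · rw [hleft i (by omega), hleft j hjm] at heq
        exact hpinj i j hij hjm heq
  simp only [Walk.length_append, Walk.length_reverse] at hj hwrap
  rcases Nat.lt_or_ge m j with hmj | hjm
  · rcases Nat.lt_or_ge i m with him | hmi
    · obtain ⟨hjC, hiC⟩ := hmid i j him hmj hj
      rcases Nat.eq_zero_or_pos i with rfl | hi0
      · rw [hleft 0 (by omega), hright j hmj.le, p.getVert_zero] at hadj
        exact hqind 0 (L - j) (by omega) (by omega) (by rwa [q.getVert_zero])
      · exact hsep _ (hiC hi0) _ hjC hadj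
    · rw [hright i hmi, hright j hmj.le] at hadj
      exact hqind (L - j) (L - i) (by omega) (by omega) hadj.symm
  · rw [hleft i (by omega), hleft j hjm] at hadj
    exact hpind i j hij hjm hadj

theorem exists_isClique_separator (hG : Chordal G) (A : Finset V) {a b : V} (ha : a ∈ A)
    (hb : b ∈ A) (hab : a ≠ b) (hnadj : ¬ G.Adj a b) :
    ∃ S : Finset V, S ⊆ A ∧ a ∉ S ∧ b ∉ S ∧ G.IsClique (S : Set V) ∧
      ¬ G.ReachableIn (↑A \ ↑S) a b := by
  obtain ⟨S, hSA, haS, hbS, hsep, hnbr⟩ := exists_minimal_separator A ha hb hab hnadj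
  refine ⟨S, hSA, haS, hbS, fun s hs t ht hst => ?_, hsep⟩
  set D : Set V := ↑A \ ↑S
  have hsD : s ∉ D := fun h => h.2 hs
  have hthrough : ∀ {c x y}, G.ReachableIn D c x → G.ReachableIn D c y → G.Adj x s →
      G.Adj y t → G.ReachableIn (insert s (insert t {z | G.ReachableIn D c z})) s t :=
    fun hx hy hxs hyt =>
      ((ReachableIn.of_adj hxs.symm (by simp) (by simp [hx])).trans
        ((hx.to_component (hx.symm.trans hy)).mono fun z hz => by simp [hz])).trans
        (ReachableIn.of_adj hyt (by simp [hy]) (by simp))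
  obtain ⟨⟨xa, hxa, hxas⟩, ⟨xb, hxb, hxbs⟩⟩ := hnbr s hs
  obtain ⟨⟨ya, hya, hyat⟩, ⟨yb, hyb, hybt⟩⟩ := hnbr t ht
  refine hG.adj_of_reachableIn_of_reachableIn (Ca := {z | G.ReachableIn D a z})
    (Cb := {z | G.ReachableIn D b z}) ?_ ?_ (fun h => hsD h.mem_right) hst
    (hthrough hxa hya hxas hyat) (hthrough hxb hyb hxbs hybt)
  · exact Set.disjoint_left.mpr fun z hza hzb => hsep (hza.trans hzb.symm)
  · exact fun x hx y hy hxy =>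
      hsep ((hx.trans (.of_adj hxy hx.mem_right hy.mem_right)).trans hy.symm)

/-- Dirac's lemma, strengthened to avoid a clique `K` so that it survives the induction. -/
theorem exists_simplicial_notMem (hG : Chordal G) (A : Finset V) (K : Set V)
    (hK : G.IsClique K) (hAK : ¬ (↑A : Set V) ⊆ K) :
    ∃ v ∈ A, v ∉ K ∧ G.IsClique (↑A ∩ G.neighborSet v) := by
  induction A using Finset.strongInduction generalizing K with
  | H A ih =>
  by_cases hA : G.IsClique (↑A : Set V)
  · obtain ⟨v, hvA, hvK⟩ := Set.not_subset.mp hAK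
    exact ⟨v, hvA, hvK, hA.subset Set.inter_subset_left⟩
  obtain ⟨a, ha, b, hb, hab, hnadj⟩ : ∃ a ∈ A, ∃ b ∈ A, a ≠ b ∧ ¬ G.Adj a b := by
    simpa [SimpleGraph.IsClique, Set.Pairwise] using hA
  obtain ⟨S, hSA, haS, hbS, hS, hsep⟩ := hG.exists_isClique_separator A ha hb hab hnadj
  set D : Set V := ↑A \ ↑S
  -- a simplicial vertex of `G[C ∪ S]` in the component `C` of `c` is simplicial in `G[A]`
  have side : ∀ c d, c ∈ A → c ∉ S → d ∈ A → d ∉ S → ¬ G.ReachableIn D c d →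
      Disjoint {z | G.ReachableIn D c z} K →
        ∃ v ∈ A, v ∉ K ∧ G.IsClique (↑A ∩ G.neighborSet v) := by
    intro c d hc hcS hd hdS hcd hK'
    set A' := A.filter fun x => G.ReachableIn D c x ∨ x ∈ S
    have hA' : A' ⊂ A := Finset.ssubset_iff_of_subset (Finset.filter_subset _ _) |>.mpr
      ⟨d, hd, by simp [hcd, hdS]⟩
    have hcA' : c ∈ A' := by simp [A', hc, ReachableIn.refl (G := G) (X := D) ⟨hc, hcS⟩]
    obtain ⟨v, hvA', hvS, hv⟩ := ih A' hA' S hS fun h => hcS (by simpa using h hcA')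
    obtain ⟨hvA, hcv | hvS'⟩ := Finset.mem_filter.mp hvA'
    · refine ⟨v, hvA, Set.disjoint_left.mp hK' hcv, hv.subset ?_⟩
      rintro y ⟨hyA, hvy⟩
      refine ⟨?_, hvy⟩
      by_cases hyS : y ∈ S
      · simp [A', Finset.mem_coe.mp hyA, hyS]
      · simp [A', Finset.mem_coe.mp hyA, hcv.trans (.of_adj hvy hcv.mem_right ⟨hyA, hyS⟩)]
    · exact absurd hvS' hvS
  by_cases haK : Disjoint {z | G.ReachableIn D a z} K
  · exact side a b ha haS hb hbS hsep haK
  refine side b a hb hbS ha haS (fun h => hsep h.symm) (Set.disjoint_left.mpr fun y hy hyK => ?_)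
  obtain ⟨x, hx, hxK⟩ := Set.not_disjoint_iff.mp haK
  have hxy : x ≠ y := fun h => hsep (hx.trans (h ▸ hy).symm)
  exact hsep ((hx.trans (.of_adj (hK hxK hyK hxy) hx.mem_right hy.mem_right)).trans hy.symm)

end Chordal

section MaxCliqueIn

open SimpleGraph

variable {V : Type*} {G : SimpleGraph V} {A C D : Set V} {v : V}

theorem maxCliqueIn_univ_iff : MaxCliqueIn G Set.univ C ↔ MaxClique G C :=
  ⟨fun h => ⟨h.2.1, fun D hD hCD => h.2.2 D (Set.subset_univ D) hD hCD⟩,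
    fun h => ⟨Set.subset_univ C, h.1, fun D _ hD hCD => h.2 D hD hCD⟩⟩

theorem exists_maxCliqueIn_superset (hA : A.Finite) (hCA : C ⊆ A) (hC : G.IsClique C) :
    ∃ D, MaxCliqueIn G A D ∧ C ⊆ D := by
  obtain ⟨D, hCD, hD⟩ := Set.Finite.exists_le_maximal (s := {D | D ⊆ A ∧ G.IsClique D})
    (hA.finite_subsets.subset fun D hD => hD.1) ⟨hCA, hC⟩
  exact ⟨D, ⟨hD.prop.1, hD.prop.2, fun E hEA hE hDE => hD.eq_of_le ⟨hEA, hE⟩ hDE⟩, hCD⟩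

theorem inter_neighborSet_subset_diff_singleton : A ∩ G.neighborSet v ⊆ A \ {v} :=
  fun _ hx => ⟨hx.1, fun hxv => G.ne_of_adj hx.2 (Set.mem_singleton_iff.mp hxv).symm⟩

theorem maxCliqueIn_insert_inter_neighborSet (hv : v ∈ A)
    (hN : G.IsClique (A ∩ G.neighborSet v)) :
    MaxCliqueIn G A (insert v (A ∩ G.neighborSet v)) := by
  refine ⟨Set.insert_subset hv Set.inter_subset_left,
    hN.insert fun _ hx _ => hx.2, fun E hEA hE hvE => hvE.antisymm fun x hx => ?_⟩
  by_cases hxv : x = v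
  · subst hxv
    exact Set.mem_insert _ _
  · exact Set.mem_insert_of_mem _ ⟨hEA hx, hE (hvE (Set.mem_insert v _)) hx (Ne.symm hxv)⟩

theorem MaxCliqueIn.eq_insert_inter_neighborSet (hC : MaxCliqueIn G A C) (hvC : v ∈ C)
    (hN : G.IsClique (A ∩ G.neighborSet v)) : C = insert v (A ∩ G.neighborSet v) := by
  have hmax := maxCliqueIn_insert_inter_neighborSet (hC.1 hvC) hN
  refine hC.2.2 _ hmax.1 hmax.2.1 fun x hx => ?_
  by_cases hxv : x = v
  · subst hxv
    exact Set.mem_insert _ _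
  · exact Set.mem_insert_of_mem _ ⟨hC.1 hx, hC.2.1 hvC hx (Ne.symm hxv)⟩

theorem MaxCliqueIn.diff_singleton (hC : MaxCliqueIn G A C) (hvC : v ∉ C) :
    MaxCliqueIn G (A \ {v}) C :=
  ⟨fun _ hx => ⟨hC.1 hx, fun hxv => hvC (hxv ▸ hx)⟩, hC.2.1,
    fun E hEA hE hCE => hC.2.2 E (hEA.trans Set.sdiff_subset) hE hCE⟩

theorem MaxCliqueIn.of_diff_singleton (hD : MaxCliqueIn G (A \ {v}) D)
    (hN : G.IsClique (A ∩ G.neighborSet v)) (hDN : D ≠ A ∩ G.neighborSet v) :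
    MaxCliqueIn G A D := by
  obtain ⟨d, hdD, hdN⟩ := Set.not_subset.mp fun hsub =>
    hDN (hD.2.2 _ inter_neighborSet_subset_diff_singleton hN fun x hx => ⟨(hD.1 hx).1, hsub hx⟩)
  refine ⟨hD.1.trans Set.sdiff_subset, hD.2.1, fun E hEA hE hDE => hD.2.2 E ?_ hE hDE⟩
  intro x hx
  refine ⟨hEA hx, fun hxv => hdN ?_⟩
  rw [Set.mem_singleton_iff.mp hxv] at hx
  exact hE hx (hDE hdD) fun hvd => (hD.1 hdD).2 hvd.symm

end MaxCliqueIn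

namespace SimpleGraph

section AddLeaf

variable {ι : Type*} {T : SimpleGraph ι} {i₀ : ι}

def addLeaf (T : SimpleGraph ι) (i₀ : ι) : SimpleGraph (Option ι) :=
  T.map Function.Embedding.some ⊔ edge none (some i₀)

theorem addLeaf_adj_none : (T.addLeaf i₀).Adj none (some i₀) := by
  simp [addLeaf, edge_adj]

theorem ReachableIn.addLeaf {X : Set ι} {i j : ι} (h : T.ReachableIn X i j) :
    (T.addLeaf i₀).ReachableIn (some '' X) (some i) (some j) :=
  (h.map (Embedding.map Function.Embedding.some T).toHom).mono_graph le_sup_left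

theorem IsTree.addLeaf [Finite ι] (hT : T.IsTree) (i₀ : ι) : (T.addLeaf i₀).IsTree := by
  have hreach : ∀ o, (T.addLeaf i₀).Reachable (some i₀) o := by
    rintro (_ | i)
    · exact addLeaf_adj_none.symm.reachable
    · exact ((hT.connected i₀ i).map (Embedding.map Function.Embedding.some T).toHom).mono
        le_sup_left
  rw [isTree_iff_connected_and_card, Finite.card_option,
    ← (isTree_iff_connected_and_card.mp hT).2, Nat.card_coe_set_eq, Nat.card_coe_set_eq,
    SimpleGraph.addLeaf, edgeSet_sup, edgeSet_map, edgeSet_edge_of_ne (by simp),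
    Set.ncard_union_eq (by simp [Sym2.forall]) (Set.toFinite _), Set.ncard_singleton,
    Set.ncard_image_of_injective _ Function.Embedding.some.sym2Map.injective]
  exact ⟨.mk fun o o' => (hreach o).symm.trans (hreach o'), rfl⟩

theorem ConnectedIn.addLeaf {X : Set ι} {Y : Set (Option ι)} (hX : T.ConnectedIn X)
    (hsome : ∀ i, some i ∈ Y ↔ i ∈ X) (hnone : none ∈ Y → i₀ ∈ X) :
    (T.addLeaf i₀).ConnectedIn Y := by
  have hs : ∀ i ∈ X, ∀ j ∈ X, (T.addLeaf i₀).ReachableIn Y (some i) (some j) :=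
    fun i hi j hj =>
      (hX i hi j hj).addLeaf.mono (by rintro _ ⟨k, hk, rfl⟩; exact (hsome k).mpr hk)
  have hn : ∀ h : none ∈ Y, (T.addLeaf i₀).ReachableIn Y none (some i₀) := fun h =>
    .of_adj addLeaf_adj_none h ((hsome i₀).mpr (hnone h))
  rintro (_ | i) hi (_ | j) hj
  · exact .refl hi
  · exact (hn hi).trans (hs _ (hnone hi) _ ((hsome j).mp hj))
  · exact (hs _ ((hsome i).mp hi) _ (hnone hj)).trans (hn hj).symm
  · exact hs _ ((hsome i).mp hi) _ ((hsome j).mp hj)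

end AddLeaf

variable {V : Type*} {G : SimpleGraph V}

/-- A junction tree (cf. `JunctionTree`) of the induced subgraph `G[A]`, indexed by an arbitrary
type so that it can be built by induction on `A`. -/
structure IsCliqueTree (G : SimpleGraph V) (A : Set V) {ι : Type*} (cl : ι → Set V)
    (T : SimpleGraph ι) : Prop where
  injective : Function.Injective cl
  maxCliqueIn : ∀ i, MaxCliqueIn G A (cl i)
  exists_eq : ∀ C, MaxCliqueIn G A C → ∃ i, cl i = C
  isTree : T.IsTree
  connectedIn : ∀ u, T.ConnectedIn {i | u ∈ cl i}

theorem isCliqueTree_empty : G.IsCliqueTree ∅ (fun _ : Unit => ∅) ⊥ where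
  injective _ _ _ := rfl
  maxCliqueIn _ :=
    ⟨subset_rfl, isClique_empty, fun _ hD _ _ => (Set.subset_empty_iff.mp hD).symm⟩
  exists_eq _ hC := ⟨(), (Set.subset_empty_iff.mp hC.1).symm⟩
  isTree := .of_subsingleton
  connectedIn _ _ hi := hi.elim

namespace IsCliqueTree

variable {A : Set V} {v : V} {ι : Type*} {cl : ι → Set V} {T : SimpleGraph ι}

theorem update (h : G.IsCliqueTree (A \ {v}) cl T) (hv : v ∈ A)
    (hN : G.IsClique (A ∩ G.neighborSet v)) {i₀ : ι}
    (hi₀ : cl i₀ = A ∩ G.neighborSet v) :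
    G.IsCliqueTree A (Function.update cl i₀ (insert v (A ∩ G.neighborSet v))) T := by
  have hvcl : ∀ i, v ∉ cl i := fun i hvi => ((h.maxCliqueIn i).1 hvi).2 rfl
  have hne : ∀ i, i ≠ i₀ → cl i ≠ A ∩ G.neighborSet v := fun i hi hiN =>
    hi (h.injective (hiN.trans hi₀.symm))
  refine ⟨fun i j hij => ?_, fun i => ?_, fun C hC => ?_, h.isTree, fun u => ?_⟩
  · by_cases hi : i = i₀ <;> by_cases hj : j = i₀ <;>
      simp only [hi, hj, Function.update_self, Function.update_of_ne, ne_eq, not_false_eq_true]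
        at hij
    · exact hi.trans hj.symm
    · exact absurd (hij ▸ Set.mem_insert v _) (hvcl j)
    · exact absurd (hij ▸ Set.mem_insert v _) (hvcl i)
    · exact h.injective hij
  · by_cases hi : i = i₀
    · rw [hi, Function.update_self]
      exact maxCliqueIn_insert_inter_neighborSet hv hN
    · rw [Function.update_of_ne hi]
      exact (h.maxCliqueIn i).of_diff_singleton hN (hne i hi)
  · by_cases hvC : v ∈ C
    · exact ⟨i₀, by rw [Function.update_self, hC.eq_insert_inter_neighborSet hvC hN]⟩
    obtain ⟨i, rfl⟩ := h.exists_eq C (hC.diff_singleton hvC)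
    have hi : i ≠ i₀ := fun hi => hvC <| by
      rw [hC.2.2 _ (maxCliqueIn_insert_inter_neighborSet hv hN).1
        (maxCliqueIn_insert_inter_neighborSet hv hN).2.1 (hi ▸ hi₀ ▸ Set.subset_insert _ _)]
      exact Set.mem_insert v _
    exact ⟨i, Function.update_of_ne hi _ _⟩
  by_cases huv : u = v
  · subst huv
    have honly :
        ∀ i, u ∈ Function.update cl i₀ (insert u (A ∩ G.neighborSet u)) i → i = i₀ :=
      fun i hui => by_contra fun hi => hvcl i (by rwa [Function.update_of_ne hi] at hui)
    intro i hi j hj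
    obtain rfl := honly i hi
    obtain rfl := honly j hj
    exact .refl hi
  · convert h.connectedIn u using 3 with i
    by_cases hi : i = i₀
    · simp [hi, hi₀, huv]
    · simp [Function.update_of_ne hi]

theorem option [Finite ι] (h : G.IsCliqueTree (A \ {v}) cl T) (hv : v ∈ A)
    (hN : G.IsClique (A ∩ G.neighborSet v))
    (hNmax : ¬ MaxCliqueIn G (A \ {v}) (A ∩ G.neighborSet v))
    {i₀ : ι} (hi₀ : A ∩ G.neighborSet v ⊆ cl i₀) :
    G.IsCliqueTree A (fun o => o.elim (insert v (A ∩ G.neighborSet v)) cl)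
      (T.addLeaf i₀) := by
  have hvcl : ∀ i, v ∉ cl i := fun i hvi => ((h.maxCliqueIn i).1 hvi).2 rfl
  refine ⟨?_, ?_, fun C hC => ?_, h.isTree.addLeaf i₀, fun u => ?_⟩
  · rintro (_ | i) (_ | j) hij <;> dsimp only [Option.elim] at hij
    · rfl
    · exact absurd (hij ▸ Set.mem_insert v _) (hvcl j)
    · exact absurd (hij ▸ Set.mem_insert v _) (hvcl i)
    · exact congrArg some (h.injective hij)
  · rintro (_ | i)
    · exact maxCliqueIn_insert_inter_neighborSet hv hN
    · exact (h.maxCliqueIn i).of_diff_singleton hN fun hiN => hNmax (hiN ▸ h.maxCliqueIn i)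
  · by_cases hvC : v ∈ C
    · exact ⟨none, (hC.eq_insert_inter_neighborSet hvC hN).symm⟩
    · obtain ⟨i, hi⟩ := h.exists_eq C (hC.diff_singleton hvC)
      exact ⟨some i, hi⟩
  by_cases huv : u = v
  · subst huv
    rintro (_ | i) hi (_ | j) hj
    · exact .refl hi
    all_goals exact absurd ‹_› (hvcl _)
  · refine (h.connectedIn u).addLeaf (fun i => Iff.rfl) fun hu => hi₀ ?_
    exact (Set.mem_insert_iff.mp hu).resolve_left huv

end IsCliqueTree

end SimpleGraph

namespace Chordal

open SimpleGraph

variable {V : Type*} {G : SimpleGraph V}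

theorem exists_isCliqueTree (hG : Chordal G) (A : Finset V) :
    ∃ (ι : Type) (_ : Finite ι) (cl : ι → Set V) (T : SimpleGraph ι),
      G.IsCliqueTree ↑A cl T := by
  induction A using Finset.strongInduction with
  | H A ih =>
  rcases A.eq_empty_or_nonempty with rfl | hA
  · exact ⟨Unit, inferInstance, _, ⊥, by simpa using isCliqueTree_empty⟩
  obtain ⟨v, hv, -, hN⟩ := hG.exists_simplicial_notMem A ∅ isClique_empty
    (by simpa [Set.subset_empty_iff] using hA.ne_empty)
  obtain ⟨ι, _, cl, T, hT⟩ := ih (A.erase v) (Finset.erase_ssubset hv)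
  rw [Finset.coe_erase] at hT
  by_cases hNmax : MaxCliqueIn G (↑A \ {v}) (↑A ∩ G.neighborSet v)
  · obtain ⟨i₀, hi₀⟩ := hT.exists_eq _ hNmax
    exact ⟨ι, ‹_›, _, T, hT.update hv hN hi₀⟩
  · obtain ⟨D, hD, hND⟩ := exists_maxCliqueIn_superset (A.finite_toSet.sdiff)
      inter_neighborSet_subset_diff_singleton hN
    obtain ⟨i₀, rfl⟩ := hT.exists_eq D hD
    exact ⟨Option ι, inferInstance, _, _, hT.option hv hN hNmax hND⟩

end Chordal

section GreedyList

variable {ι : Type*} [Fintype ι] (P : Set ι → Prop) (Q : Set ι → ι → Prop) {c₀ : ι}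

theorem List.exists_nodup_length_eq_of_step (h₀ : P {c₀})
    (hstep : ∀ W, P W → Wᶜ.Nonempty → ∃ k ∉ W, Q W k ∧ P (insert k W)) :
    ∀ n < Fintype.card ι, ∃ l : List ι, l.Nodup ∧ l.length = n + 1 ∧ l[0]? = some c₀ ∧
      P {x | x ∈ l} ∧ ∀ m (hm : m < l.length), 0 < m → Q {x | x ∈ l.take m} l[m] := by
  intro n
  induction n with
  | zero => exact fun _ => ⟨[c₀], List.nodup_singleton c₀, rfl, rfl, by simpa using h₀,
      fun m hm hm0 => absurd hm (by rw [List.length_singleton]; omega)⟩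
  | succ n ih =>
    intro hn
    obtain ⟨l, hnd, hlen, h0, hP, hQ⟩ := ih (by omega)
    obtain ⟨k, hk, hQk, hPk⟩ := hstep _ hP <| Set.nonempty_compl.mpr fun hl => by
      have := (Finset.card_le_card (s := Finset.univ) fun x _ => List.mem_toFinset.mpr
        (Set.eq_univ_iff_forall.mp hl x)).trans (List.toFinset_card_le l)
      simp only [Finset.card_univ] at this
      omega
    refine ⟨l ++ [k], ?_, by simp [hlen], ?_, ?_, fun m hm hm0 => ?_⟩
    · simpa [List.nodup_append, hnd] using (fun a ha hak => hk (hak ▸ ha) : ∀ a ∈ l, a ≠ k)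
    · rw [List.getElem?_append_left (by omega), h0]
    · convert hPk using 1
      ext
      simp [or_comm]
    · rcases Nat.lt_or_ge m l.length with hml | hml
      · rw [List.getElem_append_left hml, List.take_append_of_le_length hml.le]
        exact hQ m hml hm0
      · obtain rfl : m = l.length := by
          rw [List.length_append, List.length_singleton] at hm; omega
        rw [List.getElem_concat_length rfl, List.take_append_of_le_length le_rfl,
          List.take_length]
        exact hQk

theorem List.exists_nodup_of_step (h₀ : P {c₀})
    (hstep : ∀ W, P W → Wᶜ.Nonempty → ∃ k ∉ W, Q W k ∧ P (insert k W)) :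
    ∃ l : List ι, l.Nodup ∧ (∀ i, i ∈ l) ∧ l[0]? = some c₀ ∧
      ∀ m (hm : m < l.length), 0 < m → Q {x | x ∈ l.take m} l[m] := by
  obtain ⟨l, hnd, hlen, h0, -, hQ⟩ := List.exists_nodup_length_eq_of_step P Q h₀ hstep
    (Fintype.card ι - 1) (Nat.sub_lt (Fintype.card_pos_iff.mpr ⟨c₀⟩) one_pos)
  refine ⟨l, hnd, fun i => by_contra fun hi => ?_, h0, hQ⟩
  have := (hnd.cons hi).length_le_card
  simp only [List.length_cons] at this
  omega

end GreedyList

namespace SimpleGraph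

variable {ι : Type*} {T : SimpleGraph ι}

theorem IsTree.mem_of_reachableIn {X : Set ι} {a b : ι} (hT : T.IsTree)
    (hX : T.ReachableIn X a b) {p : T.Walk a b} (hp : p.IsPath) : ∀ x ∈ p.support, x ∈ X := by
  obtain ⟨q, hq⟩ := hX
  rw [(hT.existsUnique_path a b).unique hp (q.toPath).2]
  exact fun x hx => hq x (q.support_toPath_subset_support hx)

theorem ConnectedIn.insert_of_adj {W : Set ι} {k w : ι} (hW : T.ConnectedIn W) (hw : w ∈ W)
    (hkw : T.Adj k w) : T.ConnectedIn (insert k W) := by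
  have hk : ∀ j ∈ W, T.ReachableIn (insert k W) k j := fun j hj =>
    (ReachableIn.of_adj hkw (Set.mem_insert k W) (Set.mem_insert_of_mem k hw)).trans
      ((hW w hw j hj).mono (Set.subset_insert k W))
  rintro i (rfl | hi) j (rfl | hj)
  · exact .refl (Set.mem_insert _ W)
  · exact hk j hj
  · exact (hk i hi).symm
  · exact (hW i hi j hj).mono (Set.subset_insert k W)

theorem Connected.exists_isPath_to_set (hT : T.Connected) {W : Set ι} (hW : W.Nonempty)
    (k : ι) :
    ∃ w ∈ W, ∃ p : T.Walk k w, p.IsPath ∧ ∀ x ∈ p.support, x ∈ W → x = w := by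
  have hex : ∃ n, ∃ w ∈ W, ∃ p : T.Walk k w, p.IsPath ∧ p.length = n := by
    obtain ⟨w, hw⟩ := hW
    obtain ⟨p⟩ := hT k w
    exact ⟨_, w, hw, _, (p.toPath).2, rfl⟩
  obtain ⟨w, hw, p, hp, hlen⟩ := Nat.find_spec hex
  refine ⟨w, hw, p, hp, fun x hx hxW => by_contra fun hxw => ?_⟩
  exact (Nat.find_min hex (hlen ▸ p.length_takeUntil_lt_length hx hxw))
    ⟨x, hxW, _, hp.takeUntil hx, rfl⟩

variable {V : Type*} {cl : ι → Set V}

/-- `p` continues inside `W` to any `j ∈ W` as a path, hence as the unique path from `k` to `j`,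
which stays among the cliques containing any given `u ∈ cl k ∩ cl j`. -/
theorem IsTree.inter_biUnion_subset (hT : T.IsTree) (hcl : ∀ u, T.ConnectedIn {i | u ∈ cl i})
    {W : Set ι} (hW : T.ConnectedIn W) {k w : ι} (hw : w ∈ W) {p : T.Walk k w} (hp : p.IsPath)
    (hpW : ∀ x ∈ p.support, x ∈ W → x = w) :
    ∀ x ∈ p.support, cl k ∩ ⋃ j ∈ W, cl j ⊆ cl x := by
  rintro x hx u ⟨huk, huW⟩
  obtain ⟨j, hj, huj⟩ := Set.mem_iUnion₂.mp huW
  obtain ⟨r, hr⟩ := hW w hw j hj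
  have hrW : ∀ y ∈ r.toPath.1.support, y ∈ W := fun y hy =>
    hr y (r.support_toPath_subset_support hy)
  have hpath : (p.append r.toPath.1).IsPath := by
    have hr' := Walk.isPath_def _ |>.mp (r.toPath).2
    rw [Walk.isPath_def, Walk.support_append, List.nodup_append]
    refine ⟨Walk.isPath_def _ |>.mp hp, hr'.sublist (List.tail_sublist _),
      fun y hy z hz hyz => ?_⟩
    subst hyz
    obtain rfl := hpW y hy (hrW y (List.mem_of_mem_tail hz))
    rw [← Walk.cons_tail_support] at hr'
    exact (List.nodup_cons.mp hr').1 hz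
  exact hT.mem_of_reachableIn (hcl u k huk j huj) hpath x
    (Walk.mem_support_append_iff _ _ |>.mpr (.inl hx))

/-- On the path from a maximiser `k₀` to `W`, the last clique before `W` contains the
separator of `k₀`, so it is a maximiser adjacent to `W`. -/
theorem IsTree.exists_adj_max_separator [Finite V] [Finite ι] (hT : T.IsTree)
    (hcl : ∀ u, T.ConnectedIn {i | u ∈ cl i}) {W : Set ι} (hWne : W.Nonempty)
    (hW : T.ConnectedIn W) (hWu : Wᶜ.Nonempty) :
    ∃ k ∉ W, ∃ w ∈ W, T.Adj k w ∧ cl k ∩ ⋃ j ∈ W, cl j ⊆ cl w ∧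
      ∀ k' ∉ W, (cl k' ∩ ⋃ j ∈ W, cl j).ncard ≤ (cl k ∩ ⋃ j ∈ W, cl j).ncard := by
  obtain ⟨k₀, hk₀, hmax⟩ :=
    Set.exists_max_image _ (fun k => (cl k ∩ ⋃ j ∈ W, cl j).ncard) (Set.toFinite _) hWu
  obtain ⟨w, hw, p, hp, hpW⟩ := hT.connected.exists_isPath_to_set hWne k₀
  have hpnil : ¬ p.Nil := fun h => hk₀ (h.eq ▸ hw)
  have hkp : p.penultimate ∈ p.support := p.getVert_mem_support _
  have hkw := p.adj_penultimate hpnil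
  have hkW : p.penultimate ∉ W := fun h => hkw.ne (hpW _ hkp h)
  have hk₀k := hT.inter_biUnion_subset hcl hW hw hp hpW _ hkp
  refine ⟨_, hkW, w, hw, hkw, ?_, fun k' hk' => (hmax k' hk').trans ?_⟩
  · refine hT.inter_biUnion_subset hcl hW hw hkw.isPath_toWalk (fun x hx hxW => ?_) w (by simp)
    rw [hkw.support_toWalk, List.mem_pair] at hx
    exact hx.resolve_left fun h => hkW (h ▸ hxW)
  · exact Set.ncard_le_ncard (fun u hu => ⟨hk₀k hu, hu.2⟩) (Set.toFinite _)

theorem IsTree.exists_greedy_ordering [Finite V] [Fintype ι] (hT : T.IsTree)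
    (hcl : ∀ u, T.ConnectedIn {i | u ∈ cl i}) (c₀ : ι) :
    ∃ l : List ι, l.Nodup ∧ (∀ i, i ∈ l) ∧ l[0]? = some c₀ ∧
      ∀ m (hm : m < l.length), 0 < m →
        (∃ w ∈ l.take m, cl l[m] ∩ ⋃ j ∈ {x | x ∈ l.take m}, cl j ⊆ cl w) ∧
        ∀ k ∉ l.take m, (cl k ∩ ⋃ j ∈ {x | x ∈ l.take m}, cl j).ncard ≤
          (cl l[m] ∩ ⋃ j ∈ {x | x ∈ l.take m}, cl j).ncard :=
  List.exists_nodup_of_step (fun W => W.Nonempty ∧ T.ConnectedIn W)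
    (fun W k => (∃ w ∈ W, cl k ∩ ⋃ j ∈ W, cl j ⊆ cl w) ∧
      ∀ k' ∉ W, (cl k' ∩ ⋃ j ∈ W, cl j).ncard ≤ (cl k ∩ ⋃ j ∈ W, cl j).ncard)
    ⟨Set.singleton_nonempty c₀, by rintro _ rfl _ rfl; exact .refl rfl⟩
    fun W ⟨hWne, hW⟩ hWu => by
      obtain ⟨k, hk, w, hw, hkw, hsep, hmax⟩ := hT.exists_adj_max_separator hcl hWne hW hWu
      exact ⟨k, hk, ⟨⟨w, hw, hsep⟩, hmax⟩, Set.insert_nonempty k W, hW.insert_of_adj hw hkw⟩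

end SimpleGraph

theorem priorUnion_getElem {ι V : Type*} (cl : ι → Set V) (l : List ι) (j : Fin l.length) :
    priorUnion (fun i : Fin l.length => cl l[i]) j = ⋃ x ∈ {x | x ∈ l.take j}, cl x := by
  ext u
  simp only [priorUnion, Set.mem_iUnion, Set.mem_ofPred_eq, exists_prop, List.mem_take_iff_getElem]
  constructor
  · rintro ⟨i, hij, hu⟩
    exact ⟨_, ⟨i, by simp [Fin.lt_def.mp hij], rfl⟩, hu⟩
  · rintro ⟨_, ⟨i, hi, rfl⟩, hu⟩
    exact ⟨⟨i, by omega⟩, Fin.lt_def.mpr (lt_min_iff.mp hi).1, hu⟩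

namespace SimpleGraph.IsCliqueTree
variable {V ι : Type*} {G : SimpleGraph V} {cl : ι → Set V} {T : SimpleGraph ι}

theorem exists_pluperfectOrdering [Finite V] (h : G.IsCliqueTree Set.univ cl T) (c₀ : ι) :
    ∃ (J : ℕ) (hJ : 0 < J) (f : Fin J → Set V),
      PluperfectOrdering G f ∧ f ⟨0, hJ⟩ = cl c₀ := by
  have : Finite ι := .of_injective cl h.injective
  have : Fintype ι := .ofFinite ι
  obtain ⟨l, hnd, hl, h0, hQ⟩ := h.isTree.exists_greedy_ordering h.connectedIn c₀
  obtain ⟨hl0, rfl⟩ := List.getElem?_eq_some_iff.mp h0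
  refine ⟨l.length, hl0, fun j => cl l[j], ⟨fun i j hij => ?_, fun i => ?_, fun C hC => ?_,
    fun j hj => ?_⟩, rfl⟩
  · exact Fin.ext ((hnd.getElem_inj_iff).mp (h.injective hij))
  · exact maxCliqueIn_univ_iff.mp (h.maxCliqueIn _)
  · obtain ⟨i, rfl⟩ := h.exists_eq C (maxCliqueIn_univ_iff.mpr hC)
    obtain ⟨j, hj, rfl⟩ := List.mem_iff_getElem.mp (hl i)
    exact ⟨⟨j, hj⟩, rfl⟩
  obtain ⟨⟨w, hw, hsep⟩, hmax⟩ := hQ j j.2 (Nat.pos_of_ne_zero hj)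
  rw [priorUnion_getElem]
  refine ⟨?_, fun k hjk _ hssub => ?_⟩
  · obtain ⟨i, hi, rfl⟩ := List.mem_take_iff_getElem.mp hw
    exact ⟨⟨i, by omega⟩, Fin.lt_def.mpr (lt_min_iff.mp hi).1, hsep⟩
  · have hk : l[k] ∉ ({x | x ∈ l.take j} : Set ι) := fun hk => by
      obtain ⟨i, hi, hik⟩ := List.mem_take_iff_getElem.mp hk
      have := (hnd.getElem_inj_iff).mp hik
      rw [Fin.le_def] at hjk
      omega
    exact (hmax _ hk).not_gt (Set.ncard_lt_ncard hssub (Set.toFinite _))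

end SimpleGraph.IsCliqueTree

/-- every decomposable graph admits a pluperfect ordering of its
cliques, and any clique can be chosen first. -/
theorem exists_pluperfect_ordering {V : Type*} [Fintype V] (G : SimpleGraph V)
    (hG : Chordal G) (C₀ : Set V) (hC₀ : MaxClique G C₀) :
    ∃ (J : ℕ) (hJ : 0 < J) (f : Fin J → Set V),
      PluperfectOrdering G f ∧ f ⟨0, hJ⟩ = C₀ := by
  obtain ⟨ι, _, cl, T, hT⟩ := hG.exists_isCliqueTree Finset.univ
  rw [Finset.coe_univ] at hT
  obtain ⟨c₀, rfl⟩ := hT.exists_eq C₀ (maxCliqueIn_univ_iff.mpr hC₀)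
  exact hT.exists_pluperfectOrdering c₀
end

section
/- Suppose π is the density of a weakly structurally Markov graph law on decomposable graphs on V with full support. Then for any decomposable graph G with pluperfect clique ordering C_1,…,C_J, junction tree links (C_j, C_{h(j)}) with separators S_j, and any choice of sets R_j ⊆ C_{h(j)} with R_j ⊋ S_j, one has π(G) = ∏_j π(G⟨C_j⟩) · ∏_{j≥2} π(G⟨R_j, C_j⟩) / (π(G⟨R_j⟩) π(G⟨C_j⟩)), where G⟨A_1,…,A_k⟩ denotes the graph on V complete on each A_i and with no other edges. -/
open scoped Classical BigOperators

/-!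
For `j ≥ 1` let `U = C_1 ∪ ⋯ ∪ C_{j-1}` and `A = Uᶜ ∪ R_j`, so that `A ∩ U = R_j`. The graphs
`P = G⟨C_1,…,C_j⟩`, `Q = G⟨R_j⟩`, `P' = G⟨C_1,…,C_{j-1}⟩` and `Q' = G⟨R_j, C_j⟩` all lie in
`𝔘*(A, U)`: they are decomposable (the prefix graphs are induced subgraphs of `G` by the running
intersection property), `C_j ∩ U = S_j ⊆ R_j` makes `R_j` a separator, and `R_j ⊄ C_j` keeps `R_j`
maximal in the part on `A`. Moreover `P'`, `Q'` arise from `P`, `Q` by exchanging their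
restrictions to `U`. A graph in `𝔘*(A, U)` is determined by its two restrictions, so conditional
independence of `G_A` and `G_U` gives `π(P) π(Q) = π(P') π(Q')`. By full support every factor is
positive, and these identities telescope to the formula since `G = G⟨C_1,…,C_J⟩`.
-/
open SimpleGraph

section CoverGraph

variable {V : Type*}

lemma coverGraph_isClique {𝒜 : Set (Set V)} {M : Set V} (hM : M ∈ 𝒜) :
    (coverGraph 𝒜).IsClique M := fun _ hx _ hy hne => ⟨hne, M, hM, hx, hy⟩

lemma coverGraph_support_subset (𝒜 : Set (Set V)) : (coverGraph 𝒜).support ⊆ ⋃₀ 𝒜 := by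
  rintro u ⟨v, -, M, hM, hu, -⟩
  exact ⟨M, hM, hu⟩

lemma coverGraph_induce_le {𝒜 ℬ : Set (Set V)} {S : Set V}
    (h : ∀ M ∈ 𝒜, ∃ N ∈ ℬ, M ∩ S ⊆ N) :
    (coverGraph 𝒜).induce S ≤ (coverGraph ℬ).induce S := by
  rintro ⟨u, hu⟩ ⟨v, hv⟩ ⟨hne, M, hM, huM, hvM⟩
  obtain ⟨N, hN, hMN⟩ := h M hM
  exact ⟨hne, N, hN, hMN ⟨huM, hu⟩, hMN ⟨hvM, hv⟩⟩

lemma induce_adj_iff_of_induce_eq {G H : SimpleGraph V} {S : Set V}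
    (h : G.induce S = H.induce S) {u v : V} (hu : u ∈ S) (hv : v ∈ S) :
    G.Adj u v ↔ H.Adj u v := by
  rw [← induce_adj (u := ⟨u, hu⟩) (v := ⟨v, hv⟩), h, induce_adj]

lemma Chordal.of_induce_eq {G H : SimpleGraph V} {S : Set V} (hG : Chordal G)
    (hHS : H.support ⊆ S) (hGH : G.induce S = H.induce S) : Chordal H := by
  rintro ⟨n, e, hn, hadj⟩
  have hS : ∀ i, e i ∈ S := fun i => hHS ⟨_, (hadj i (i + 1)).2 (Or.inr rfl)⟩
  exact hG ⟨n, e, hn, fun i j => (induce_adj_iff_of_induce_eq hGH (hS i) (hS j)).trans (hadj i j)⟩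

lemma ZMod.natCast_ne_zero_of_pos_of_lt {n k : ℕ} (hk : 0 < k) (hkn : k < n) :
    (k : ZMod n) ≠ 0 := fun h0 =>
  absurd (Nat.le_of_dvd hk ((ZMod.natCast_eq_zero_iff k n).1 h0)) (by omega)

lemma not_adj_add_two_of_induced_cycle {H : SimpleGraph V} {n : ℕ} (hn : 4 ≤ n)
    (e : ZMod n ↪ V) (hadj : ∀ i j : ZMod n, H.Adj (e i) (e j) ↔ (i = j + 1 ∨ j = i + 1))
    (a : ZMod n) : ¬ H.Adj (e a) (e (a + 2)) := by
  rw [hadj]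
  rintro (h | h)
  · exact ZMod.natCast_ne_zero_of_pos_of_lt (n := n) (k := 3) (by norm_num) (by omega)
      (by push_cast; linear_combination -h)
  · exact ZMod.natCast_ne_zero_of_pos_of_lt (n := n) (k := 1) (by norm_num) (by omega)
      (by push_cast; linear_combination h)

lemma chordal_coverGraph_of_subset_pair {𝒜 : Set (Set V)} {X Y : Set V} (h𝒜 : 𝒜 ⊆ {X, Y}) :
    Chordal (coverGraph 𝒜) := by
  rintro ⟨n, e, hn, hadj⟩
  have hfar : ∀ a, ∀ M ∈ 𝒜, e a ∈ M → e (a + 2) ∉ M := fun a M hM ha ha2 =>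
    not_adj_add_two_of_induced_cycle hn e hadj a <|
      coverGraph_isClique hM ha ha2 fun h =>
        ZMod.natCast_ne_zero_of_pos_of_lt (n := n) (k := 2) (by norm_num) (by omega)
          (by push_cast; linear_combination -e.injective h)
  have hedge : ∀ i : ZMod n, ∃ M ∈ 𝒜, e i ∈ M ∧ e (i + 1) ∈ M := fun i =>
    ((hadj i (i + 1)).2 (Or.inr rfl)).2
  obtain ⟨M₀, hM₀, h0, h1⟩ := hedge 0
  obtain ⟨M₁, hM₁, h1', h2⟩ := hedge 1
  obtain ⟨M₂, hM₂, h2', h3⟩ := hedge 2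
  -- Of the three edges `01`, `12`, `23`, two lie in the same member of `𝒜`.
  have : M₀ = M₁ ∨ M₀ = M₂ ∨ M₁ = M₂ := by
    rcases h𝒜 hM₀ with rfl | rfl <;> rcases h𝒜 hM₁ with rfl | rfl <;>
      rcases h𝒜 hM₂ with rfl | rfl <;> simp
  rw [zero_add] at h1
  rw [one_add_one_eq_two] at h2
  rw [show (2 : ZMod n) + 1 = 1 + 2 by ring] at h3
  rcases this with rfl | rfl | rfl
  · exact hfar 0 M₀ hM₀ h0 (by rwa [zero_add])
  · exact hfar 0 M₀ hM₀ h0 (by rwa [zero_add])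
  · exact hfar 1 M₁ hM₁ h1' h3

end CoverGraph

section Decomposition

variable {V : Type*} {G H : SimpleGraph V} {A B : Set V}

lemma isDecomposition_of_not_adj (hcov : A ∪ B = Set.univ) (hclique : G.IsClique (A ∩ B))
    (hsep : ∀ u ∈ A \ B, ∀ v ∈ B \ A, ¬ G.Adj u v) : IsDecomposition G A B := by
  refine ⟨hcov, hclique, fun u hu v hv p => ?_⟩
  obtain ⟨d, hd, hfst, hsnd⟩ := p.exists_boundary_dart (A \ B) hu fun h => hv.2 h.1
  have hA : d.snd ∈ A := by
    by_contra hA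
    have hB : d.snd ∈ B := (hcov.symm ▸ Set.mem_univ d.snd : d.snd ∈ A ∪ B).resolve_left hA
    exact hsep _ hfst _ ⟨hB, hA⟩ d.adj
  exact ⟨d.snd, ⟨hA, not_not.1 fun hB => hsnd ⟨hA, hB⟩⟩,
    p.dart_snd_mem_support_of_mem_darts hd⟩

lemma IsDecomposition.not_adj (hG : IsDecomposition G A B) {u v : V} (hu : u ∈ A \ B)
    (hv : v ∈ B \ A) : ¬ G.Adj u v := by
  intro hadj
  obtain ⟨w, hw, hws⟩ := hG.2.2 u hu v hv (Walk.cons hadj Walk.nil)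
  simp only [Walk.support_cons, Walk.support_nil, List.mem_cons,
    List.not_mem_nil, or_false] at hws
  rcases hws with rfl | rfl
  · exact hu.2 hw.2
  · exact hv.2 hw.1

lemma IsDecomposition.le_of_induce_le (hG : IsDecomposition G A B)
    (hA : G.induce A ≤ H.induce A) (hB : G.induce B ≤ H.induce B) : G ≤ H := by
  intro u v hadj
  by_cases hAuv : u ∈ A ∧ v ∈ A
  · exact hA (v := ⟨u, hAuv.1⟩) (w := ⟨v, hAuv.2⟩) hadj
  by_cases hBuv : u ∈ B ∧ v ∈ B
  · exact hB (v := ⟨u, hBuv.1⟩) (w := ⟨v, hBuv.2⟩) hadj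
  have hcov : ∀ w, w ∈ A ∨ w ∈ B := fun w => by rw [← Set.mem_union, hG.1]; trivial
  rcases hcov u with hu | hu <;> rcases hcov v with hv | hv
  · exact absurd ⟨hu, hv⟩ hAuv
  · exact (hG.not_adj ⟨hu, fun h => hBuv ⟨h, hv⟩⟩ ⟨hv, fun h => hAuv ⟨hu, h⟩⟩ hadj).elim
  · exact (hG.not_adj ⟨hv, fun h => hBuv ⟨hu, h⟩⟩ ⟨hu, fun h => hAuv ⟨h, hv⟩⟩ hadj.symm).elim
  · exact absurd ⟨hu, hv⟩ hBuv

lemma IsDecomposition.ext (hG : IsDecomposition G A B) (hH : IsDecomposition H A B)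
    (hA : G.induce A = H.induce A) (hB : G.induce B = H.induce B) : G = H :=
  le_antisymm (hG.le_of_induce_le hA.le hB.le) (hH.le_of_induce_le hA.ge hB.ge)

end Decomposition

section Markov

variable {V : Type*}

lemma Set.compl_union_inter_of_subset {U R : Set V} (hRU : R ⊆ U) : (Uᶜ ∪ R) ∩ U = R := by
  rw [Set.union_inter_distrib_right, Set.compl_inter_self, Set.empty_union,
    Set.inter_eq_left.2 hRU]

/-- `R` is a maximal clique of the part on `Uᶜ ∪ R` because no vertex outside `U` is adjacent to
a vertex of `R \ C`. -/
lemma coverGraph_mem_Ustar {ℬ : Set (Set V)} {U C R : Set V} (hchord : Chordal (coverGraph ℬ))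
    (hRU : R ⊆ U) (hCU : C ∩ U ⊆ R) (hRC : ¬ R ⊆ C) (hR : ∃ M ∈ ℬ, R ⊆ M)
    (hℬ : ∀ M ∈ ℬ, M ⊆ U ∨ M ⊆ C) : coverGraph ℬ ∈ Ustar (Uᶜ ∪ R) U := by
  have hAU := Set.compl_union_inter_of_subset hRU
  have hcov : (Uᶜ ∪ R) ∪ U = Set.univ := by
    rw [Set.union_right_comm, Set.compl_union_self, Set.univ_union]
  obtain ⟨M₀, hM₀, hRM₀⟩ := hR
  have hRclique : (coverGraph ℬ).IsClique R := (coverGraph_isClique hM₀).subset hRM₀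
  refine ⟨hchord, isDecomposition_of_not_adj hcov (by rwa [hAU]) ?_, ?_⟩
  · rintro u ⟨hu, huU⟩ v ⟨hvU, hv⟩ ⟨-, M, hM, huM, hvM⟩
    rcases hℬ M hM with hMU | hMC
    · exact huU (hMU huM)
    · exact hv (Or.inr (hCU ⟨hMC hvM, hvU⟩))
  rw [hAU]
  refine ⟨Set.subset_union_right, hRclique, fun D hDA hD hRD => ?_⟩
  refine hRD.antisymm fun v hvD => by_contra fun hvR => ?_
  have hvU : v ∉ U := fun hvU => hvR (hAU ▸ ⟨hDA hvD, hvU⟩)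
  obtain ⟨r, hrR, hrC⟩ := Set.not_subset.1 hRC
  obtain ⟨-, M, hM, hvM, hrM⟩ := hD hvD (hRD hrR) fun h => hvR (h ▸ hrR)
  rcases hℬ M hM with hMU | hMC
  · exact hvU (hMU hvM)
  · exact hrC (hMC hrM)

lemma mass_singleton (π : SimpleGraph V → ℝ) (X : SimpleGraph V) : mass π {X} = π X :=
  finsum_mem_singleton

lemma apply_le_mass [Finite V] {π : SimpleGraph V → ℝ} (hπ : ∀ G, 0 ≤ π G)
    {S : Set (SimpleGraph V)} {X : SimpleGraph V} (hX : X ∈ S) : π X ≤ mass π S := by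
  rw [mass, ← S.toFinite.coe_toFinset, finsum_mem_coe_finset]
  exact Finset.single_le_sum (fun G _ => hπ G) (S.toFinite.mem_toFinset.2 hX)

namespace WeaklyStructurallyMarkov

variable {π : SimpleGraph V → ℝ} {A B : Set V}

lemma apply_mul_mass_Ustar (hwsm : WeaklyStructurallyMarkov π) (hAB : A ∪ B = Set.univ)
    {X : SimpleGraph V} (hX : X ∈ Ustar A B) :
    π X * mass π (Ustar A B) =
      mass π {G ∈ Ustar A B | G.induce A = X.induce A} *
        mass π {G ∈ Ustar A B | G.induce B = X.induce B} := by
  have hfibre : {G ∈ Ustar A B | G.induce A = X.induce A ∧ G.induce B = X.induce B} = {X} := by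
    ext G
    refine ⟨fun ⟨hG, hGA, hGB⟩ => hG.2.1.ext hX.2.1 hGA hGB, ?_⟩
    rintro rfl
    exact ⟨hX, rfl, rfl⟩
  rw [← hwsm A B hAB X hX X hX, hfibre, mass_singleton]

lemma mul_eq_mul_of_induce_eq (hwsm : WeaklyStructurallyMarkov π) (hAB : A ∪ B = Set.univ)
    (hZ : mass π (Ustar A B) ≠ 0) {P P' Q Q' : SimpleGraph V}
    (hP : P ∈ Ustar A B) (hP' : P' ∈ Ustar A B) (hQ : Q ∈ Ustar A B) (hQ' : Q' ∈ Ustar A B)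
    (hPQ' : P.induce A = Q'.induce A) (hPP' : P.induce B = P'.induce B)
    (hQP' : Q.induce A = P'.induce A) (hQQ' : Q.induce B = Q'.induce B) :
    π P * π Q = π P' * π Q' := by
  have eP := hwsm.apply_mul_mass_Ustar hAB hP
  have eQ := hwsm.apply_mul_mass_Ustar hAB hQ
  have eP' := hwsm.apply_mul_mass_Ustar hAB hP'
  have eQ' := hwsm.apply_mul_mass_Ustar hAB hQ'
  rw [← hQP', ← hPP'] at eP'
  rw [← hPQ', ← hQQ'] at eQ'
  set Z := mass π (Ustar A B)
  refine mul_right_cancel₀ (mul_ne_zero hZ hZ) ?_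
  calc π P * π Q * (Z * Z) = (π P * Z) * (π Q * Z) := by ring
    _ = (π P' * Z) * (π Q' * Z) := by rw [eP, eQ, eP', eQ']; ring
    _ = π P' * π Q' * (Z * Z) := by ring

end WeaklyStructurallyMarkov


theorem WeaklyStructurallyMarkov.glue [Finite V] {π : SimpleGraph V → ℝ} (hπ : ∀ G, 0 ≤ π G)
    (hsupp : FullSupport π) (hwsm : WeaklyStructurallyMarkov π) {𝒜 : Set (Set V)} {C R : Set V}
    (h𝒜 : Chordal (coverGraph 𝒜)) (hC𝒜 : Chordal (coverGraph (insert C 𝒜)))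
    (hR : ∃ M ∈ 𝒜, R ⊆ M) (hCR : C ∩ ⋃₀ 𝒜 ⊆ R) (hRC : ¬ R ⊆ C) :
    π (coverGraph (insert C 𝒜)) * π (coverGraph {R}) =
      π (coverGraph 𝒜) * π (coverGraph {R, C}) := by
  set U := ⋃₀ 𝒜
  set A := Uᶜ ∪ R
  obtain ⟨M₀, hM₀, hRM₀⟩ := hR
  have hRU : R ⊆ U := hRM₀.trans (Set.subset_sUnion_of_mem hM₀)
  have h𝒜A : ∀ M ∈ 𝒜, M ∩ A ⊆ R := fun M hM x ⟨hxM, hxA⟩ =>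
    (Set.compl_union_inter_of_subset hRU).subset ⟨hxA, Set.subset_sUnion_of_mem hM hxM⟩
  have hmem := fun ℬ hchord hR hℬ =>
    coverGraph_mem_Ustar (ℬ := ℬ) (U := U) hchord hRU hCR hRC hR hℬ
  have hsub𝒜 : ∀ M ∈ 𝒜, M ⊆ U ∨ M ⊆ C := fun M hM => Or.inl (Set.subset_sUnion_of_mem hM)
  have hP := hmem _ hC𝒜 ⟨M₀, Or.inr hM₀, hRM₀⟩ (Set.forall_mem_insert.2 ⟨Or.inr subset_rfl, hsub𝒜⟩)
  have hP' := hmem _ h𝒜 ⟨M₀, hM₀, hRM₀⟩ hsub𝒜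
  have hQ := hmem {R} (chordal_coverGraph_of_subset_pair (X := R) (Y := C) (by simp))
    ⟨R, rfl, subset_rfl⟩ (by simp [hRU])
  have hQ' := hmem {R, C} (chordal_coverGraph_of_subset_pair subset_rfl)
    ⟨R, Or.inl rfl, subset_rfl⟩ (by simp [hRU])
  have hZ := (lt_of_lt_of_le (hsupp _ hQ.1) (apply_le_mass hπ hQ)).ne'
  refine hwsm.mul_eq_mul_of_induce_eq hP.2.1.1 hZ
    hP hP' hQ hQ' (le_antisymm ?_ ?_) (le_antisymm ?_ ?_) (le_antisymm ?_ ?_) (le_antisymm ?_ ?_)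
    <;> refine coverGraph_induce_le ?_
  · rintro M (rfl | hM)
    exacts [⟨M, Or.inr rfl, Set.inter_subset_left⟩, ⟨R, Or.inl rfl, h𝒜A M hM⟩]
  · rintro M (rfl | rfl)
    exacts [⟨M₀, Or.inr hM₀, Set.inter_subset_left.trans hRM₀⟩,
      ⟨M, Or.inl rfl, Set.inter_subset_left⟩]
  · rintro M (rfl | hM)
    exacts [⟨M₀, hM₀, hCR.trans hRM₀⟩, ⟨M, hM, Set.inter_subset_left⟩]
  · exact fun M hM => ⟨M, Or.inr hM, Set.inter_subset_left⟩
  · rintro M rfl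
    exact ⟨M₀, hM₀, Set.inter_subset_left.trans hRM₀⟩
  · exact fun M hM => ⟨R, rfl, h𝒜A M hM⟩
  · rintro M rfl
    exact ⟨M, Or.inl rfl, Set.inter_subset_left⟩
  · rintro M (rfl | rfl)
    exacts [⟨M, rfl, Set.inter_subset_left⟩, ⟨R, rfl, hCR⟩]

end Markov

section Ordering

variable {V : Type*} {J : ℕ}

lemma exists_maxClique_superset [Finite V] (G : SimpleGraph V) {C : Set V} (hC : G.IsClique C) :
    ∃ M, MaxClique G M ∧ C ⊆ M := by
  obtain ⟨M, hCM, hM⟩ := Finite.exists_le_maximal (p := G.IsClique) hC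
  exact ⟨M, ⟨hM.1, fun D hD hMD => hMD.antisymm (hM.2 hD hMD)⟩, hCM⟩

lemma eq_coverGraph_range [Finite V] {G : SimpleGraph V} {f : Fin J → Set V}
    (hmax : ∀ i, MaxClique G (f i)) (hsurj : ∀ C, MaxClique G C → ∃ i, f i = C) :
    G = coverGraph (Set.range f) := by
  ext u v
  refine ⟨fun hadj => ?_, ?_⟩
  · obtain ⟨M, hM, huvM⟩ := exists_maxClique_superset G (isClique_pair.2 fun _ => hadj)
    obtain ⟨i, rfl⟩ := hsurj M hM
    exact ⟨hadj.ne, f i, ⟨i, rfl⟩, huvM (by simp), huvM (by simp)⟩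
  · rintro ⟨hne, _, ⟨i, rfl⟩, hu, hv⟩
    exact (hmax i).1 hu hv hne

def prefixCliques (f : Fin J → Set V) (m : ℕ) : Set (Set V) :=
  f '' {i | (i : ℕ) < m}

def RunningIntersection (f : Fin J → Set V) : Prop :=
  ∀ j : Fin J, (j : ℕ) ≠ 0 → ∃ i < j, f j ∩ priorUnion f j ⊆ f i

lemma PluperfectOrdering.runningIntersection {G : SimpleGraph V} {f : Fin J → Set V}
    (hf : PluperfectOrdering G f) : RunningIntersection f :=
  fun j hj => (hf.2.2.2 j hj).1

lemma sUnion_prefixCliques (f : Fin J → Set V) (j : Fin J) :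
    ⋃₀ prefixCliques f j = priorUnion f j :=
  Set.sUnion_image _ _

lemma prefixCliques_succ (f : Fin J → Set V) (j : Fin J) :
    prefixCliques f (j + 1) = insert (f j) (prefixCliques f j) := by
  ext M
  simp only [prefixCliques, Set.mem_image, Set.mem_ofPred_eq, Set.mem_insert_iff,
    Nat.lt_succ_iff_lt_or_eq, Fin.val_inj, or_and_right, exists_or, exists_eq_left,
    eq_comm (a := M)]
  exact or_comm

lemma prefixCliques_one {n : ℕ} (f : Fin (n + 1) → Set V) : prefixCliques f 1 = {f 0} := by
  simp [prefixCliques]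

lemma prefixCliques_self (f : Fin J → Set V) : prefixCliques f J = Set.range f := by
  simp [prefixCliques]

lemma RunningIntersection.exists_mem_prefixCliques_superset {f : Fin J → Set V}
    (hf : RunningIntersection f) {m : ℕ} (hm : m ≠ 0) {s : Set V}
    (hs : s ⊆ ⋃₀ prefixCliques f m) (k : Fin J) (hsk : s ⊆ f k) :
    ∃ M ∈ prefixCliques f m, s ⊆ M := by
  induction k using WellFoundedLT.induction with
  | ind k ih =>
    by_cases hkm : (k : ℕ) < m
    · exact ⟨f k, ⟨k, hkm, rfl⟩, hsk⟩
    obtain ⟨i, hik, hi⟩ := hf k (by omega)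
    have hprior : ⋃₀ prefixCliques f m ⊆ priorUnion f k := by
      rw [← sUnion_prefixCliques]
      exact Set.sUnion_mono (Set.image_mono fun i (hi : (i : ℕ) < m) => by simp; omega)
    exact ih i hik ((Set.subset_inter hsk (hs.trans hprior)).trans hi)

lemma RunningIntersection.induce_coverGraph_prefixCliques {f : Fin J → Set V}
    (hf : RunningIntersection f) {m : ℕ} (hm : m ≠ 0) :
    (coverGraph (Set.range f)).induce (⋃₀ prefixCliques f m) =
      (coverGraph (prefixCliques f m)).induce (⋃₀ prefixCliques f m) := by
  refine le_antisymm (coverGraph_induce_le ?_) (coverGraph_induce_le ?_)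
  · rintro _ ⟨k, rfl⟩
    exact hf.exists_mem_prefixCliques_superset hm Set.inter_subset_right k Set.inter_subset_left
  · exact fun M hM => ⟨M, Set.image_subset_range _ _ hM, Set.inter_subset_left⟩

lemma RunningIntersection.chordal_coverGraph_prefixCliques {f : Fin J → Set V}
    (hf : RunningIntersection f) (hG : Chordal (coverGraph (Set.range f))) {m : ℕ} (hm : m ≠ 0) :
    Chordal (coverGraph (prefixCliques f m)) :=
  hG.of_induce_eq (coverGraph_support_subset _) (hf.induce_coverGraph_prefixCliques hm)

end Ordering

lemma IsGraphLaw.apply_eq_one_of_isEmpty {V : Type*} [Fintype V] [IsEmpty V]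
    {π : SimpleGraph V → ℝ} (hlaw : IsGraphLaw π) (G : SimpleGraph V) : π G = 1 := by
  rw [← hlaw.2.2, finsum_eq_single π G fun H hH => (hH (Subsingleton.elim _ _)).elim]

lemma Finset.prod_range_div_of_ne_zero {K : Type*} [CommGroupWithZero K] (g : ℕ → K)
    (hg : ∀ i, g i ≠ 0) (n : ℕ) : ∏ i ∈ Finset.range n, g (i + 1) / g i = g n / g 0 := by
  induction n with
  | zero => simp [hg 0]
  | succ n ih => rw [Finset.prod_range_succ, ih, div_mul_div_cancel₀' (hg n)]

lemma Fin.prod_filter_val_ne_zero {M : Type*} [CommMonoid M] {n : ℕ} (F : Fin (n + 1) → M) :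
    ∏ j ∈ Finset.univ.filter (fun j : Fin (n + 1) => (j : ℕ) ≠ 0), F j = ∏ k : Fin n, F k.succ := by
  rw [Finset.prod_filter, Fin.prod_univ_succ]
  simp

theorem WeaklyStructurallyMarkov.mul_eq_mul_prefixCliques {V : Type*} [Finite V] {J : ℕ}
    {π : SimpleGraph V → ℝ} (hπ : ∀ G, 0 ≤ π G) (hsupp : FullSupport π)
    (hwsm : WeaklyStructurallyMarkov π) {f : Fin J → Set V}
    (hchord : ∀ m ≠ 0, Chordal (coverGraph (prefixCliques f m))) {i j : Fin J} (hij : i < j)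
    {R : Set V} (hRi : R ⊆ f i) (hSR : f j ∩ f i ⊂ R)
    (hsep : f j ∩ f i = f j ∩ priorUnion f j) :
    π (coverGraph (prefixCliques f (j + 1))) * π (coverGraph {R}) =
      π (coverGraph (prefixCliques f j)) * π (coverGraph {R, f j}) := by
  have hj : (j : ℕ) ≠ 0 := by rw [Fin.lt_def] at hij; omega
  rw [prefixCliques_succ]
  exact hwsm.glue hπ hsupp (hchord _ hj) (prefixCliques_succ f j ▸ hchord _ (Nat.succ_ne_zero _))
    ⟨f i, ⟨i, hij, rfl⟩, hRi⟩
    (by rw [sUnion_prefixCliques, ← hsep]; exact hSR.subset)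
    (fun hRj => hSR.not_subset fun x hx => ⟨hRj hx, hRi hx⟩)

lemma eq_prod_mul_prod_div_of_mul_eq_mul {K : Type*} [Field K] {n : ℕ} (g : ℕ → K)
    (a b c : Fin (n + 1) → K) (hg : ∀ m, g m ≠ 0) (hb : ∀ j, b j ≠ 0) (hc : ∀ j, c j ≠ 0)
    (h0 : g 0 = c 0) (hstep : ∀ k : Fin n, g (k + 1) * b k.succ = g k * a k.succ) :
    g n = (∏ j, c j) *
      ∏ j ∈ Finset.univ.filter (fun j : Fin (n + 1) => (j : ℕ) ≠ 0), a j / (b j * c j) := by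
  have hratio : ∀ k : Fin n, c k.succ * (a k.succ / (b k.succ * c k.succ)) = g (k + 1) / g k :=
    fun k => by
      rw [mul_div_assoc', mul_comm (b _), mul_div_mul_left _ _ (hc _), div_eq_div_iff (hb _) (hg _)]
      linear_combination -hstep k
  calc g n = g 0 * ∏ k ∈ Finset.range n, g (k + 1) / g k := by
        rw [Finset.prod_range_div_of_ne_zero g hg, mul_div_cancel₀ _ (hg 0)]
    _ = _ := by
      rw [Fin.prod_univ_succ, Fin.prod_filter_val_ne_zero, mul_assoc, ← Finset.prod_mul_distrib,
        ← Fin.prod_univ_eq_prod_range (fun k => g (k + 1) / g k), h0]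
      simp only [hratio]

theorem wsm_factorisation_general {V : Type*} [Fintype V] (π : SimpleGraph V → ℝ)
    (hlaw : IsGraphLaw π) (hsupp : FullSupport π) (hwsm : WeaklyStructurallyMarkov π)
    (G : SimpleGraph V) (hG : Chordal G) {J : ℕ} (f : Fin J → Set V)
    (hf : PluperfectOrdering G f)
    (h : Fin J → Fin J) (hh : ∀ j : Fin J, (j : ℕ) ≠ 0 → h j < j)
    (hsep : ∀ j : Fin J, (j : ℕ) ≠ 0 → f j ∩ f (h j) = f j ∩ priorUnion f j)
    (R : Fin J → Set V)
    (hR : ∀ j : Fin J, (j : ℕ) ≠ 0 → R j ⊆ f (h j) ∧ f j ∩ f (h j) ⊂ R j) :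
    π G = (∏ i : Fin J, π (coverGraph {f i})) *
      ∏ j ∈ Finset.univ.filter (fun j : Fin J => (j : ℕ) ≠ 0),
        π (coverGraph {R j, f j}) / (π (coverGraph {R j}) * π (coverGraph {f j})) := by
  rcases J with _ | n
  · have : IsEmpty V := ⟨fun v => by
      obtain ⟨M, hM, -⟩ := exists_maxClique_superset G (G.isClique_singleton v)
      exact (hf.2.2.1 M hM).choose.elim0⟩
    simp [hlaw.apply_eq_one_of_isEmpty G]
  have hGf : G = coverGraph (Set.range f) := eq_coverGraph_range hf.2.1 hf.2.2.1
  have hchord : ∀ m ≠ 0, Chordal (coverGraph (prefixCliques f m)) := fun _ hm =>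
    hf.runningIntersection.chordal_coverGraph_prefixCliques (hGf ▸ hG) hm
  have hsingle : ∀ X : Set V, π (coverGraph {X}) ≠ 0 := fun X =>
    (hsupp _ (chordal_coverGraph_of_subset_pair (X := X) (Y := X) (by simp))).ne'
  rw [hGf, ← prefixCliques_self]
  refine eq_prod_mul_prod_div_of_mul_eq_mul (fun m => π (coverGraph (prefixCliques f (m + 1))))
    _ _ _ (fun m => (hsupp _ (hchord _ m.succ_ne_zero)).ne') (fun _ => hsingle _)
    (fun _ => hsingle _) (by rw [zero_add, prefixCliques_one]) fun k => ?_
  have hk : ((k.succ : Fin (n + 1)) : ℕ) ≠ 0 := by simp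
  simpa only [Fin.val_succ] using hwsm.mul_eq_mul_prefixCliques hlaw.1 hsupp hchord (hh _ hk)
    (hR _ hk).1 (hR _ hk).2 (hsep _ hk)

/-- factorisation of the density of a weakly structurally Markov law
along a pluperfect ordering:
`π(G) = ∏_j π(G⟨C_j⟩) · ∏_{j≥2} π(G⟨R_j,C_j⟩)/(π(G⟨R_j⟩) π(G⟨C_j⟩))`. -/
theorem wsm_factorisation {V : Type*} [Fintype V] (π : SimpleGraph V → ℝ)
    (hlaw : IsGraphLaw π) (hsupp : FullSupport π) (hwsm : WeaklyStructurallyMarkov π)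
    (G : SimpleGraph V) (hG : Chordal G) {J : ℕ} (f : Fin J → Set V)
    (hf : PluperfectOrdering G f)
    (h : Fin J → Fin J) (hh : ∀ j : Fin J, (j : ℕ) ≠ 0 → h j < j)
    (T : SimpleGraph (Fin J))
    (hT : ∀ a b : Fin J, T.Adj a b ↔ ((a : ℕ) ≠ 0 ∧ h a = b) ∨ ((b : ℕ) ≠ 0 ∧ h b = a))
    (hjunction : ∀ v : V, ((T.induce {i | v ∈ f i}).Connected))
    (hsep : ∀ j : Fin J, (j : ℕ) ≠ 0 → f j ∩ f (h j) = f j ∩ priorUnion f j)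
    (R : Fin J → Set V)
    (hR : ∀ j : Fin J, (j : ℕ) ≠ 0 → R j ⊆ f (h j) ∧ f j ∩ f (h j) ⊂ R j) :
    π G = (∏ i : Fin J, π (coverGraph {f i})) *
      ∏ j ∈ Finset.univ.filter (fun j : Fin J => (j : ℕ) ≠ 0),
        π (coverGraph {R j, f j}) / (π (coverGraph {R j}) * π (coverGraph {f j})) :=
  wsm_factorisation_general π hlaw hsupp hwsm G hG f hf h hh hsep R hR
end

section
/- Any two unordered pairs {R_1, R_2} and {R_1', R_2'} of subsets of V satisfying R_i ∩ R_j-type conditions — namely R_1 ∩ R_2 = S = R_1' ∩ R_2', with all four sets strict supersets of S and contained in V — can be connected by a finite sequence of such pairs in which consecutive pairs differ by adding or removing a single vertex to/from one member of the pair, with every intermediate pair also satisfying: union ⊆ V, intersection = S, and both members strict supersets of S. -/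
open scoped Classical BigOperators

/-- An admissible (ordered representative of an unordered) pair: the two sets meet
exactly in `S` and both are strict supersets of `S`. -/
def GoodPair {V : Type*} (S : Set V) (p : Set V × Set V) : Prop :=
  p.1 ∩ p.2 = S ∧ S ⊂ p.1 ∧ S ⊂ p.2

/-- One step: add or remove a single vertex to/from one member of the pair,
landing again on an admissible pair. -/
def PairStep {V : Type*} (S : Set V) (p q : Set V × Set V) : Prop :=
  GoodPair S q ∧
    ((p.2 = q.2 ∧ ∃ v : V, q.1 = insert v p.1 ∨ p.1 = insert v q.1) ∨
     (p.1 = q.1 ∧ ∃ v : V, q.2 = insert v p.2 ∨ p.2 = insert v q.2))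

/-!
Two admissible pairs sharing a member `R`, say `(A, R)` and `(A', R)`, are linked through
`(A ∪ A', R)`, which is again admissible, by adding and then removing one vertex at a time.
Hence `(R₁, R₂)` reaches `(R₁', R₂')` via `(insert a S, R₂)`, `(insert a S, insert b S)` and
`(R₁', insert b S)` whenever `a ∈ R₁ \ S` and `b ∈ R₂' \ S` can be chosen distinct. If they
cannot, `a` lies in `R₂'`, so it differs from every vertex of `R₁' \ S`, and the same route
reaches the swapped pair `(R₂', R₁')`.
-/

open Relation

section

variable {V : Type*} {S : Set V}

namespace GoodPair

theorem swap {p : Set V × Set V} (h : GoodPair S p) : GoodPair S p.swap :=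
  ⟨by rw [Prod.fst_swap, Prod.snd_swap, Set.inter_comm]; exact h.1, h.2.2, h.2.1⟩

theorem mono_left {A B R : Set V} (h : GoodPair S (A, R)) (hSB : S ⊂ B) (hBA : B ⊆ A) :
    GoodPair S (B, R) := by
  refine ⟨le_antisymm ?_ (Set.subset_inter hSB.subset ?_), hSB, h.2.2⟩
  · exact h.1 ▸ Set.inter_subset_inter_left R hBA
  · exact h.1 ▸ Set.inter_subset_right

theorem mono_right {A B R : Set V} (h : GoodPair S (R, A)) (hSB : S ⊂ B) (hBA : B ⊆ A) :
    GoodPair S (R, B) :=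
  (h.swap.mono_left hSB hBA).swap

theorem union_left {A A' R : Set V} (h : GoodPair S (A, R)) (h' : GoodPair S (A', R)) :
    GoodPair S (A ∪ A', R) :=
  ⟨by rw [Set.union_inter_distrib_right, h.1, h'.1, Set.union_self],
    h.2.1.trans_subset Set.subset_union_left, h.2.2⟩

theorem insert_insert {a b : V} (ha : a ∉ S) (hb : b ∉ S) (hab : a ≠ b) :
    GoodPair S (insert a S, insert b S) := by
  refine ⟨?_, Set.ssubset_insert ha, Set.ssubset_insert hb⟩
  ext x
  simp only [Set.mem_inter_iff, Set.mem_insert_iff]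
  grind

end GoodPair

namespace PairStep

theorem swap {p q : Set V × Set V} (h : PairStep S p q) : PairStep S p.swap q.swap :=
  ⟨h.1.swap, h.2.symm⟩

theorem symm {p q : Set V × Set V} (hp : GoodPair S p) (h : PairStep S p q) :
    PairStep S q p := by
  refine ⟨hp, ?_⟩
  rcases h.2 with ⟨h₂, v, hv⟩ | ⟨h₁, v, hv⟩
  · exact .inl ⟨h₂.symm, v, hv.symm⟩
  · exact .inr ⟨h₁.symm, v, hv.symm⟩

end PairStep

theorem GoodPair.of_reflTransGen {p q : Set V × Set V} (hp : GoodPair S p)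
    (h : ReflTransGen (PairStep S) p q) : GoodPair S q := by
  induction h with
  | refl => exact hp
  | tail _ hstep _ => exact hstep.1

theorem reflTransGen_pairStep_swap {p q : Set V × Set V}
    (h : ReflTransGen (PairStep S) p q) : ReflTransGen (PairStep S) p.swap q.swap :=
  ReflTransGen.lift Prod.swap (fun _ _ => PairStep.swap) _ _ h

theorem reflTransGen_pairStep_symm {p q : Set V × Set V} (hp : GoodPair S p)
    (h : ReflTransGen (PairStep S) p q) : ReflTransGen (PairStep S) q p := by
  induction h with
  | refl => rfl
  | tail hpq hqr ih => exact .head (hqr.symm (hp.of_reflTransGen hpq)) ih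

theorem reflTransGen_pairStep_union_left {B D R : Set V} (hD : D.Finite) (hB : S ⊂ B)
    (h : GoodPair S (B ∪ D, R)) : ReflTransGen (PairStep S) (B, R) (B ∪ D, R) := by
  induction D, hD using Set.Finite.induction_on with
  | empty => rw [Set.union_empty]
  | @insert x D _ _ ih =>
    rw [Set.union_insert] at h ⊢
    have hD : GoodPair S (B ∪ D, R) :=
      h.mono_left (hB.trans_subset Set.subset_union_left) (Set.subset_insert _ _)
    exact (ih hD).tail ⟨h, .inl ⟨rfl, x, .inl rfl⟩⟩

theorem reflTransGen_pairStep_of_subset_left [Finite V] {A B R : Set V} (hBA : B ⊆ A)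
    (hB : GoodPair S (B, R)) (hA : GoodPair S (A, R)) :
    ReflTransGen (PairStep S) (B, R) (A, R) := by
  rw [← Set.union_sdiff_cancel hBA] at hA ⊢
  exact reflTransGen_pairStep_union_left (Set.toFinite _) hB.2.1 hA

theorem reflTransGen_pairStep_of_snd_eq [Finite V] {A A' R : Set V}
    (h : GoodPair S (A, R)) (h' : GoodPair S (A', R)) :
    ReflTransGen (PairStep S) (A, R) (A', R) :=
  have hU := h.union_left h'
  (reflTransGen_pairStep_of_subset_left Set.subset_union_left h hU).trans
    (reflTransGen_pairStep_symm h'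
      (reflTransGen_pairStep_of_subset_left Set.subset_union_right h' hU))

theorem reflTransGen_pairStep_of_fst_eq [Finite V] {B B' R : Set V}
    (h : GoodPair S (R, B)) (h' : GoodPair S (R, B')) :
    ReflTransGen (PairStep S) (R, B) (R, B') :=
  reflTransGen_pairStep_swap (reflTransGen_pairStep_of_snd_eq h.swap h'.swap)

theorem reflTransGen_pairStep_of_ne [Finite V] {R₁ R₂ R₁' R₂' : Set V}
    (h : GoodPair S (R₁, R₂)) (h' : GoodPair S (R₁', R₂')) {a b : V}
    (ha : a ∈ R₁ \ S) (hb : b ∈ R₂' \ S) (hab : a ≠ b) :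
    ReflTransGen (PairStep S) (R₁, R₂) (R₁', R₂') := by
  have h₁ : GoodPair S (insert a S, R₂) :=
    h.mono_left (Set.ssubset_insert ha.2) (Set.insert_subset ha.1 h.2.1.subset)
  have h₂ : GoodPair S (insert a S, insert b S) := GoodPair.insert_insert ha.2 hb.2 hab
  have h₃ : GoodPair S (R₁', insert b S) :=
    h'.mono_right (Set.ssubset_insert hb.2) (Set.insert_subset hb.1 h'.2.2.subset)
  exact (reflTransGen_pairStep_of_snd_eq h h₁).trans <|
    (reflTransGen_pairStep_of_fst_eq h₁ h₂).trans <|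
    (reflTransGen_pairStep_of_snd_eq h₂ h₃).trans (reflTransGen_pairStep_of_fst_eq h₃ h')

end

theorem pairs_connected_general {V : Type*} [Fintype V] (S : Set V)
    (R₁ R₂ R₁' R₂' : Set V)
    (h : GoodPair S (R₁, R₂)) (h' : GoodPair S (R₁', R₂')) :
    Relation.ReflTransGen (PairStep S) (R₁, R₂) (R₁', R₂') ∨
    Relation.ReflTransGen (PairStep S) (R₁, R₂) (R₂', R₁') := by
  obtain ⟨a, ha⟩ := Set.nonempty_of_ssubset h.2.1
  obtain ⟨a', ha'⟩ := Set.nonempty_of_ssubset h'.2.1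
  obtain ⟨b', hb'⟩ := Set.nonempty_of_ssubset h'.2.2
  by_cases hab' : a = b'
  · subst hab'
    have haa' : a ≠ a' := by
      rintro rfl
      exact ha.2 (h'.1 ▸ ⟨ha'.1, hb'.1⟩)
    exact .inr (reflTransGen_pairStep_of_ne h h'.swap ha ha' haa')
  · exact .inl (reflTransGen_pairStep_of_ne h h' ha hb' hab')

/-- any two admissible unordered pairs with the same intersection `S`
can be connected by single-vertex addition/removal steps through admissible pairs. -/
theorem pairs_connected {V : Type*} [Fintype V] (S : Set V)
    (hS : S.ncard ≤ Fintype.card V - 2) (R₁ R₂ R₁' R₂' : Set V)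
    (h : GoodPair S (R₁, R₂)) (h' : GoodPair S (R₁', R₂')) :
    Relation.ReflTransGen (PairStep S) (R₁, R₂) (R₁', R₂') ∨
    Relation.ReflTransGen (PairStep S) (R₁, R₂) (R₂', R₁') :=
  pairs_connected_general S R₁ R₂ R₁' R₂' h h'
end

section
/- The restriction of the Erdős–Rényi random graph law with edge probability p ∈ (0,1) to decomposable graphs is a clique exponential family law: for every decomposable G, P(G) ∝ ∏_{C ∈ 𝒞(G)} φ_C / ∏_{S ∈ 𝒮(G)} φ_S with φ_A = (p/(1−p))^{|A|(|A|−1)/2}. -/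
open scoped Classical BigOperators

/-!
Since `(1 - p) ^ N * (p / (1 - p)) ^ m = p ^ m * (1 - p) ^ (N - m)`, everything reduces to
`∑_C (|C| choose 2) = |E(G)| + ∑_S (|S| choose 2)`. Both sides of this count unordered pairs
`{u, v}` with multiplicity. The junction-tree nodes whose clique contains `{u, v}` are the
intersection of the subtrees belonging to `u` and to `v`, hence span a subtree; it is nonempty
exactly when `uv` is an edge, and its edges are the junction-tree edges whose separator contains
`{u, v}`. A nonempty tree has one vertex more than it has edges.
-/

open Finset

namespace SimpleGraph

variable {α : Type*} {T : SimpleGraph α}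

lemma Preconnected.exists_isPath_support_subset {S : Set α} (hS : (T.induce S).Preconnected)
    {i j : α} (hi : i ∈ S) (hj : j ∈ S) :
    ∃ p : T.Walk i j, p.IsPath ∧ ∀ x ∈ p.support, x ∈ S := by
  obtain ⟨w⟩ := hS ⟨i, hi⟩ ⟨j, hj⟩
  refine ⟨(w.map (Embedding.induce S).toHom).toPath.1, Path.isPath _, fun x hx => ?_⟩
  obtain ⟨y, -, rfl⟩ := List.mem_map.1 <|
    (Walk.support_map _ w) ▸ Walk.support_toPath_subset_support _ hx
  exact y.2

lemma IsAcyclic.induce_inter_preconnected (hT : T.IsAcyclic) {A B : Set α}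
    (hA : (T.induce A).Preconnected) (hB : (T.induce B).Preconnected) :
    (T.induce (A ∩ B)).Preconnected := by
  rintro ⟨i, hiA, hiB⟩ ⟨j, hjA, hjB⟩
  obtain ⟨p, hp, hpA⟩ := hA.exists_isPath_support_subset hiA hjA
  obtain ⟨q, hq, hqB⟩ := hB.exists_isPath_support_subset hiB hjB
  have hpq : p = q := congrArg Subtype.val ((hT.subsingleton_path i j).elim ⟨p, hp⟩ ⟨q, hq⟩)
  subst hpq
  exact ⟨p.induce (A ∩ B) fun x hx => ⟨hpA x hx, hqB x hx⟩⟩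

lemma IsAcyclic.ncard_eq_card_edges_add [Fintype α] (hT : T.IsAcyclic) {S : Set α}
    (hS : (T.induce S).Preconnected) :
    S.ncard = #{e ∈ T.edgeFinset | e ∈ S.sym2} + if S.Nonempty then 1 else 0 := by
  rcases S.eq_empty_or_nonempty with rfl | hne
  · simp
  have htree : (T.induce S).IsTree :=
    ⟨(connected_iff _).2 ⟨hS, hne.to_subtype⟩, hT.induce S⟩
  have hedges : #(T.induce S).edgeFinset = #{e ∈ T.edgeFinset | e ∈ S.sym2} := by
    rw [← card_map (Function.Embedding.subtype (· ∈ S)).sym2Map, map_edgeFinset_induce]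
    congr 1
    ext e
    simp [Finset.mem_sym2_iff, Set.mem_sym2_iff_subset, Set.subset_def]
  rw [if_pos hne, ← hedges, htree.card_edgeFinset, Set.ncard_eq_toFinset_card',
    Set.toFinset_card]

end SimpleGraph

lemma Set.ncard_choose_two_eq_card_sym2 {V : Type*} [Fintype V] (s : Set V) :
    s.ncard.choose 2 = #{z : Sym2 V | ¬ z.IsDiag ∧ z ∈ s.sym2} := by
  rw [Set.ncard_eq_toFinset_card', ← Sym2.card_image_offDiag]
  congr 1
  ext z
  induction z using Sym2.ind with
  | h a b => aesop

lemma Finset.sum_ncard_choose_two_eq {V ι : Type*} [Fintype V] (I : Finset ι)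
    (s : ι → Set V) :
    ∑ i ∈ I, (s i).ncard.choose 2 =
      ∑ z : Sym2 V with ¬ z.IsDiag, #{i ∈ I | z ∈ (s i).sym2} := by
  simp_rw [Set.ncard_choose_two_eq_card_sym2, card_filter, sum_filter]
  rw [sum_comm]
  refine sum_congr rfl fun z _ => ?_
  split_ifs with hz <;> simp [hz]

namespace JunctionTree

variable {V : Type*} {G : SimpleGraph V} (JT : JunctionTree G)

def cliquesContaining (z : Sym2 V) : Set (Fin JT.J) := {i | z ∈ (JT.clique i).sym2}

lemma preconnected_induce_cliquesContaining (z : Sym2 V) :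
    (JT.T.induce (JT.cliquesContaining z)).Preconnected := by
  induction z using Sym2.ind with
  | h u v =>
    exact JT.isTree.isAcyclic.induce_inter_preconnected (A := {i | u ∈ JT.clique i})
      (B := {i | v ∈ JT.clique i}) (JT.junction u).preconnected (JT.junction v).preconnected

lemma mem_sym2_cliquesContaining_iff (z : Sym2 V) (e : Sym2 (Fin JT.J)) :
    e ∈ (JT.cliquesContaining z).sym2 ↔ z ∈ (JT.sep e).sym2 := by
  induction e using Sym2.ind with
  | h a b => exact (Set.ext_iff.1 (Set.sym2_inter _ _) z).symm

lemma cliquesContaining_nonempty_iff [Finite V] {z : Sym2 V} (hz : ¬ z.IsDiag) :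
    (JT.cliquesContaining z).Nonempty ↔ z ∈ G.edgeSet := by
  induction z using Sym2.ind with
  | h u v =>
    constructor
    · rintro ⟨i, hu, hv⟩
      exact (JT.clique_max i).1 hu hv hz
    · intro huv
      obtain ⟨C, hC, hCmax, hmax⟩ :=
        Finite.exists_le_maximal (SimpleGraph.isClique_pair.2 fun _ => huv)
      obtain ⟨i, rfl⟩ :=
        JT.clique_surj C ⟨hCmax, fun D hD hCD => le_antisymm hCD (hmax hD hCD)⟩
      exact ⟨i, hC (by simp), hC (by simp)⟩

lemma card_cliquesContaining [Fintype V] {z : Sym2 V} (hz : ¬ z.IsDiag) :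
    #{i | z ∈ (JT.clique i).sym2} =
      #{e ∈ JT.T.edgeFinset | z ∈ (JT.sep e).sym2} + if z ∈ G.edgeSet then 1 else 0 := by
  have h := JT.isTree.isAcyclic.ncard_eq_card_edges_add
    (JT.preconnected_induce_cliquesContaining z)
  simp_rw [mem_sym2_cliquesContaining_iff, cliquesContaining_nonempty_iff JT hz] at h
  rw [← h, ← Set.ncard_coe_finset]
  congr 1
  ext i
  simp [cliquesContaining]

theorem sum_ncard_clique_choose_two [Fintype V] :
    ∑ i, (JT.clique i).ncard.choose 2 =
      G.edgeSet.ncard + ∑ e ∈ JT.T.edgeFinset, (JT.sep e).ncard.choose 2 := by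
  have hedges : ∑ z : Sym2 V with ¬ z.IsDiag, (if z ∈ G.edgeSet then 1 else 0) =
      G.edgeSet.ncard := by
    rw [sum_boole, Nat.cast_id, ← Set.ncard_coe_finset]
    congr 1
    ext z
    simpa using fun hz => G.not_isDiag_of_mem_edgeSet hz
  rw [sum_ncard_choose_two_eq, sum_ncard_choose_two_eq,
    sum_congr rfl fun z hz => JT.card_cliquesContaining (mem_filter.1 hz).2, sum_add_distrib,
    hedges, add_comm]

end JunctionTree

lemma pow_mul_pow_sub_eq_pow_mul_div_pow {K : Type*} [Field K] (a : K) {b : K} (hb : b ≠ 0)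
    {m n : ℕ} (hmn : m ≤ n) : a ^ m * b ^ (n - m) = b ^ n * (a / b) ^ m := by
  rw [div_pow, pow_sub₀ _ hb hmn]
  ring

/-- the Erdős–Rényi law with edge probability `p`, restricted to
decomposable graphs, is a clique exponential family law with
`φ_A = (p/(1−p))^{|A|(|A|−1)/2}`. -/
theorem erdos_renyi_is_clique_exponential {V : Type*} [Fintype V] (p : ℝ)
    (hp0 : 0 < p) (hp1 : p < 1) :
    ∃ c : ℝ, 0 < c ∧ ∀ G : SimpleGraph V, Chordal G → ∀ JT : JunctionTree G,
      p ^ G.edgeSet.ncard * (1 - p) ^ ((Fintype.card V).choose 2 - G.edgeSet.ncard) =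
        c * (∏ i : Fin JT.J, (p / (1 - p)) ^ ((JT.clique i).ncard.choose 2)) /
          ∏ᶠ e ∈ JT.T.edgeSet, (p / (1 - p)) ^ ((JT.sep e).ncard.choose 2) := by
  have hq : p / (1 - p) ≠ 0 := div_ne_zero hp0.ne' (sub_ne_zero.2 hp1.ne')
  refine ⟨(1 - p) ^ (Fintype.card V).choose 2, pow_pos (sub_pos.2 hp1) _, fun G _ JT => ?_⟩
  have hedges : G.edgeSet.ncard ≤ (Fintype.card V).choose 2 :=
    (Set.ncard_eq_toFinset_card' _).trans_le G.card_edgeFinset_le_card_choose_two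
  rw [← JT.T.coe_edgeFinset, finprod_mem_coe_finset, prod_pow_eq_pow_sum,
    prod_pow_eq_pow_sum, JT.sum_ncard_clique_choose_two, pow_add, ← mul_assoc,
    mul_div_cancel_right₀ _ (pow_ne_zero _ hq)]
  exact pow_mul_pow_sub_eq_pow_mul_div_pow p (sub_ne_zero.2 hp1.ne') hedges
end

section
/- If a graph law π on decomposable graphs is of clique–separator factorisation form with parameters (φ, ψ), and data X has decomposable likelihood p(X|G) = ∏_{C ∈ 𝒞(G)} λ_C(X_C) / ∏_{S ∈ 𝒮(G)} λ_S(X_S), then the posterior π(G|X) ∝ π(G)p(X|G) is again of clique–separator factorisation form, with parameters φ'_A = φ_A λ_A(X_A) and ψ'_A = ψ_A λ_A(X_A). -/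
open scoped Classical BigOperators

theorem prod_div_finprod_mem_mul_prod_div_finprod_mem {ι κ M : Type*} [Fintype ι]
    [DivisionCommMonoid M] {s : Set κ} (hs : s.Finite) (f f' : ι → M) (g g' : κ → M) :
    (∏ i, f i) / (∏ᶠ e ∈ s, g e) * ((∏ i, f' i) / ∏ᶠ e ∈ s, g' e) =
      (∏ i, f i * f' i) / ∏ᶠ e ∈ s, g e * g' e := by
  rw [Finset.prod_mul_distrib, finprod_mem_mul_distrib hs, div_mul_div_comm]

theorem csf_conjugacy_general {V : Type*} (π L : SimpleGraph V → ℝ)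
    (φ ψ lam : Set V → ℝ) (c : ℝ)
    (hc : 0 < c)
    (hπ : ∀ G : SimpleGraph V, Chordal G → ∀ JT : JunctionTree G,
      π G = c * (∏ i : Fin JT.J, φ (JT.clique i)) /
        ∏ᶠ e ∈ JT.T.edgeSet, ψ (JT.sep e))
    (hL : ∀ G : SimpleGraph V, Chordal G → ∀ JT : JunctionTree G,
      L G = (∏ i : Fin JT.J, lam (JT.clique i)) /
        ∏ᶠ e ∈ JT.T.edgeSet, lam (JT.sep e)) :
    ∃ c' : ℝ, 0 < c' ∧ ∀ G : SimpleGraph V, Chordal G → ∀ JT : JunctionTree G,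
      π G * L G = c' * (∏ i : Fin JT.J, φ (JT.clique i) * lam (JT.clique i)) /
        ∏ᶠ e ∈ JT.T.edgeSet, ψ (JT.sep e) * lam (JT.sep e) := by
  refine ⟨c, hc, fun G hG JT => ?_⟩
  rw [hπ G hG JT, hL G hG JT, mul_div_assoc, mul_assoc,
    prod_div_finprod_mem_mul_prod_div_finprod_mem (Set.toFinite _), mul_div_assoc]

/-- conjugacy: a clique–separator factorisation prior combined with
a decomposable likelihood yields a clique–separator factorisation posterior with
parameters `φ_A λ_A` and `ψ_A λ_A`. -/
theorem csf_conjugacy {V : Type*} [Fintype V] (π L : SimpleGraph V → ℝ)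
    (φ ψ lam : Set V → ℝ) (c : ℝ)
    (hφ : ∀ A, 0 < φ A) (hψ : ∀ A, 0 < ψ A) (hlam : ∀ A, 0 < lam A) (hc : 0 < c)
    (hπ : ∀ G : SimpleGraph V, Chordal G → ∀ JT : JunctionTree G,
      π G = c * (∏ i : Fin JT.J, φ (JT.clique i)) /
        ∏ᶠ e ∈ JT.T.edgeSet, ψ (JT.sep e))
    (hL : ∀ G : SimpleGraph V, Chordal G → ∀ JT : JunctionTree G,
      L G = (∏ i : Fin JT.J, lam (JT.clique i)) /
        ∏ᶠ e ∈ JT.T.edgeSet, lam (JT.sep e)) :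
    ∃ c' : ℝ, 0 < c' ∧ ∀ G : SimpleGraph V, Chordal G → ∀ JT : JunctionTree G,
      π G * L G = c' * (∏ i : Fin JT.J, φ (JT.clique i) * lam (JT.clique i)) /
        ∏ᶠ e ∈ JT.T.edgeSet, ψ (JT.sep e) * lam (JT.sep e) :=
  csf_conjugacy_general π L φ ψ lam c hc hπ hL
end

section
/- If (A,B) is a decomposition of a decomposable graph G and S = A ∩ B is a maximal complete subset of G_A (and of G_B whenever it is a separator), then the maximal-clique set of G is the union of the maximal cliques of G_A and of G_B, each maximal clique of G being entirely contained in A or in B. -/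
open scoped Classical BigOperators

/-! An edge of `G` cannot join `A \ B` to `B \ A`, since the one-edge walk would have to meet
`A ∩ B`; hence every clique of `G` lies in `A` or in `B`. A maximal clique `C` of `G_A` that
grows in `G` thus grows inside `B`, so `C ⊆ A ∩ B`; maximality in `G_A` forces `C = A ∩ B`,
and `A ∩ B` cannot grow inside `B` because it is maximal in `G_B`. -/

theorem MaxClique.maxCliqueIn {V : Type*} {G : SimpleGraph V} {A C : Set V}
    (hC : MaxClique G C) (hCA : C ⊆ A) : MaxCliqueIn G A C :=
  ⟨hCA, hC.1, fun D _ => hC.2 D⟩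

namespace IsDecomposition

variable {V : Type*} {G : SimpleGraph V} {A B : Set V}

theorem symm (h : IsDecomposition G A B) : IsDecomposition G B A := by
  obtain ⟨hcov, hclique, hsep⟩ := h
  refine ⟨Set.union_comm B A ▸ hcov, Set.inter_comm A B ▸ hclique, fun u hu v hv p => ?_⟩
  obtain ⟨w, hw, hwp⟩ := hsep v hv u hu p.reverse
  exact ⟨w, Set.inter_comm A B ▸ hw, by simpa using hwp⟩

theorem subset_or_subset_of_isClique (h : IsDecomposition G A B) {C : Set V}
    (hC : G.IsClique C) : C ⊆ A ∨ C ⊆ B := by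
  by_contra! hCAB
  obtain ⟨v, hvC, hvA⟩ := Set.not_subset.mp hCAB.1
  obtain ⟨u, huC, huB⟩ := Set.not_subset.mp hCAB.2
  have hcov : ∀ x, x ∈ A ∪ B := fun x => h.1 ▸ Set.mem_univ x
  have huA : u ∈ A := (hcov u).resolve_right huB
  have hvB : v ∈ B := (hcov v).resolve_left hvA
  have huv : G.Adj u v := hC huC hvC fun huv => hvA (huv ▸ huA)
  obtain ⟨w, hw, hwuv⟩ := h.2.2 u ⟨huA, huB⟩ v ⟨hvB, hvA⟩ huv.toWalk
  rcases (by simpa using hwuv : w = u ∨ w = v) with rfl | rfl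
  · exact huB hw.2
  · exact hvA hw.1

theorem maxClique_of_maxCliqueIn_left (h : IsDecomposition G A B)
    (hB : MaxCliqueIn G B (A ∩ B)) {C : Set V} (hC : MaxCliqueIn G A C) : MaxClique G C := by
  refine ⟨hC.2.1, fun D hD hCD => ?_⟩
  rcases h.subset_or_subset_of_isClique hD with hDA | hDB
  · exact hC.2.2 D hDA hD hCD
  · obtain rfl : C = A ∩ B :=
      hC.2.2 _ Set.inter_subset_left h.2.1 (Set.subset_inter hC.1 (hCD.trans hDB))
    exact hB.2.2 D hDB hD hCD

theorem maxClique_iff (h : IsDecomposition G A B) (hA : MaxCliqueIn G A (A ∩ B))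
    (hB : MaxCliqueIn G B (A ∩ B)) {C : Set V} :
    MaxClique G C ↔ MaxCliqueIn G A C ∨ MaxCliqueIn G B C :=
  ⟨fun hC => (h.subset_or_subset_of_isClique hC.1).imp hC.maxCliqueIn hC.maxCliqueIn,
    Or.rec (h.maxClique_of_maxCliqueIn_left hB)
      (h.symm.maxClique_of_maxCliqueIn_left (Set.inter_comm A B ▸ hA))⟩

end IsDecomposition

theorem maxCliques_of_decomposition_general {V : Type*} (G : SimpleGraph V)
    (A B : Set V) (hAB : IsDecomposition G A B)
    (hA : MaxCliqueIn G A (A ∩ B)) (hB : MaxCliqueIn G B (A ∩ B)) :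
    {C : Set V | MaxClique G C} =
      {C : Set V | MaxCliqueIn G A C ∨ MaxCliqueIn G B C} ∧
    ∀ C : Set V, MaxClique G C → C ⊆ A ∨ C ⊆ B :=
  ⟨Set.ext fun _ => hAB.maxClique_iff hA hB,
    fun _ hC => hAB.subset_or_subset_of_isClique hC.1⟩

/-- if `(A,B)` is a decomposition of a decomposable graph `G` and
`S = A ∩ B` is a maximal complete subset of `G_A` (and of `G_B`), then the maximal
cliques of `G` are exactly the maximal cliques of `G_A` together with those of
`G_B`, and every maximal clique of `G` lies entirely within `A` or within `B`. -/
theorem maxCliques_of_decomposition {V : Type*} [Fintype V] (G : SimpleGraph V)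
    (hG : Chordal G) (A B : Set V) (hAB : IsDecomposition G A B)
    (hA : MaxCliqueIn G A (A ∩ B)) (hB : MaxCliqueIn G B (A ∩ B)) :
    {C : Set V | MaxClique G C} =
      {C : Set V | MaxCliqueIn G A C ∨ MaxCliqueIn G B C} ∧
    ∀ C : Set V, MaxClique G C → C ⊆ A ∨ C ⊆ B :=
  maxCliques_of_decomposition_general G A B hAB hA hB
end
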